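/- arXiv:1702.05589 — 5 statements merged into one kernel-verified Lean document; each statement's English description precedes it below -/
import Mathlib

section
/- For any normal monotone circuit C that is a d-DNNF in zero-suppressed semantics, each OR-component of C is a multitree. -/
/-- The type of a gate in a monotone circuit: variable gate, AND-gate, or OR-gate. -/
inductive GateType : Type
  | var
  | and
  | or
  deriving DecidableEq

/-- A monotone circuit: a finite DAG of gates with wires, a distinguished output gate,
each gate labeled as a variable gate (carrying a variable label in `ι`), an AND-gate,
or an OR-gate.  Variable gates have no inputs, and the wire relation is acyclic. -/
structure Circuit (ι : Type) [DecidableEq ι] where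
  Gate : Type
  fintypeGate : Fintype Gate
  decEqGate : DecidableEq Gate
  wire : Gate → Gate → Prop
  decWire : ∀ a b : Gate, Decidable (wire a b)
  typ : Gate → GateType
  vlab : Gate → ι
  output : Gate
  var_no_input : ∀ g g' : Gate, typ g' = GateType.var → ¬ wire g g'
  acyclic : ∀ g : Gate, ¬ Relation.TransGen wire g g

attribute [instance] Circuit.fintypeGate Circuit.decEqGate Circuit.decWire

namespace Circuit

variable {ι : Type} [DecidableEq ι]

/-- The inputs of a gate `g`: the gates with a wire to `g`. -/
def inputs (C : Circuit ι) (g : C.Gate) : Finset C.Gate :=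
  Finset.univ.filter fun g' => C.wire g' g

/-- The fan-in of a gate: its number of inputs. -/
def fanin (C : Circuit ι) (g : C.Gate) : ℕ :=
  (C.inputs g).card

/-- The gates that `g` is an input of. -/
def outs (C : Circuit ι) (g : C.Gate) : Finset C.Gate :=
  Finset.univ.filter fun g' => C.wire g g'

/-- The size of a circuit: its number of gates plus its number of wires. -/
noncomputable def size (C : Circuit ι) : ℕ :=
  Fintype.card C.Gate + {p : C.Gate × C.Gate | C.wire p.1 p.2}.ncard

/-- Zero-suppressed semantics: `Captures C g t` says that the assignment `t`
(a finite set of variables) belongs to the set captured by gate `g`, defined bottom-up: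
a variable gate captures exactly its own singleton; an AND-gate captures the unions of
assignments captured by its inputs (one from each input); an OR-gate captures the union
of the sets captured by its inputs. -/
inductive Captures (C : Circuit ι) : C.Gate → Finset ι → Prop
  | var (g : C.Gate) (h : C.typ g = GateType.var) : Captures C g {C.vlab g}
  | and (g : C.Gate) (h : C.typ g = GateType.and) (f : C.Gate → Finset ι)
      (hf : ∀ g' ∈ C.inputs g, Captures C g' (f g')) :
      Captures C g ((C.inputs g).biUnion f)
  | or (g : C.Gate) (h : C.typ g = GateType.or) (g' : C.Gate) (hg' : g' ∈ C.inputs g)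
      (t : Finset ι) (ht : Captures C g' t) : Captures C g t

/-- The set `S(g)` of assignments captured by a gate `g` in zero-suppressed semantics. -/
def S (C : Circuit ι) (g : C.Gate) : Set (Finset ι) :=
  {t | C.Captures g t}

/-- The captured set `S(C)` of the circuit: the captured set of its output gate. -/
def captured (C : Circuit ι) : Set (Finset ι) :=
  C.S C.output

/-- `C.Reaches g g'` holds when there is a (possibly empty) directed path of wires
from `g` to `g'`. -/
def Reaches (C : Circuit ι) : C.Gate → C.Gate → Prop :=
  Relation.ReflTransGen C.wire

/-- An AND-gate is decomposable if no variable gate has directed paths to two distinct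
inputs of it. -/
def DecomposableAnd (C : Circuit ι) (g : C.Gate) : Prop :=
  ∀ v g1 g2 : C.Gate, C.typ v = GateType.var → g1 ∈ C.inputs g → g2 ∈ C.inputs g →
    g1 ≠ g2 → C.Reaches v g1 → C.Reaches v g2 → False

/-- An OR-gate is deterministic if the captured sets of any two distinct inputs
are disjoint. -/
def DeterministicOr (C : Circuit ι) (g : C.Gate) : Prop :=
  ∀ g1 g2 : C.Gate, g1 ∈ C.inputs g → g2 ∈ C.inputs g → g1 ≠ g2 →
    Disjoint (C.S g1) (C.S g2)

/-- A circuit is a d-DNNF in zero-suppressed semantics if every AND-gate is decomposable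
and every OR-gate is deterministic. -/
def dDNNF (C : Circuit ι) : Prop :=
  (∀ g : C.Gate, C.typ g = GateType.and → C.DecomposableAnd g) ∧
  (∀ g : C.Gate, C.typ g = GateType.or → C.DeterministicOr g)

/-- Distinct variable gates carry distinct variable labels (i.e., variables can be
identified with variable gates, as in the paper). -/
def VarInj (C : Circuit ι) : Prop :=
  Set.InjOn C.vlab {g : C.Gate | C.typ g = GateType.var}

/-- `C` is ∅-pruned: every gate captures a nonempty set (no gate is unsatisfiable). -/
def EmptyPruned (C : Circuit ι) : Prop :=
  ∀ g : C.Gate, (C.S g).Nonempty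

/-- `C` is {}-pruned: no gate captures a set containing the empty assignment. -/
def ZeroPruned (C : Circuit ι) : Prop :=
  ∀ g : C.Gate, (∅ : Finset ι) ∉ C.S g

/-- An exit: an OR-gate having an input which is not an OR-gate. -/
def IsExit (C : Circuit ι) (g : C.Gate) : Prop :=
  C.typ g = GateType.or ∧ ∃ g' ∈ C.inputs g, C.typ g' ≠ GateType.or

/-- A normal circuit: arity-two, ∅-pruned, {}-pruned, collapsed, and discriminative. -/
def Normal (C : Circuit ι) : Prop :=
  (∀ g : C.Gate, C.fanin g ≤ 2) ∧
  C.EmptyPruned ∧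
  C.ZeroPruned ∧
  (∀ g : C.Gate, C.typ g = GateType.and → C.fanin g ≠ 1) ∧
  (∀ g : C.Gate, C.IsExit g →
    C.fanin g = 1 ∧ (C.outs g).card = 1 ∧ ∀ g' : C.Gate, C.wire g g' → C.typ g' = GateType.or)

/-- A wire both of whose endpoints are OR-gates. -/
def orWire (C : Circuit ι) (a b : C.Gate) : Prop :=
  C.wire a b ∧ C.typ a = GateType.or ∧ C.typ b = GateType.or

/-- The OR-component of an OR-gate `g`: the OR-gates connected to `g` by paths
traversing, in either direction, only wires both of whose endpoints are OR-gates. -/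
def orComponent (C : Circuit ι) (g : C.Gate) : Set C.Gate :=
  {g' : C.Gate | C.typ g' = GateType.or ∧
    Relation.ReflTransGen (fun x y => C.orWire x y ∨ C.orWire y x) g g'}

/-- The exits of an OR-gate `g`: the exits of its OR-component having a directed path
to `g` within the OR-component. -/
def exitsOf (C : Circuit ι) (g : C.Gate) : Set C.Gate :=
  {e : C.Gate | C.IsExit e ∧ Relation.ReflTransGen C.orWire e g}

/-- An OR-path of `C`: a directed path (of length at least one) all of whose
intermediate gates are OR-gates. -/
inductive OrPath (C : Circuit ι) : C.Gate → C.Gate → Prop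
  | single (a b : C.Gate) (h : C.wire a b) : OrPath C a b
  | step (a m b : C.Gate) (h : C.wire a m) (hm : C.typ m = GateType.or)
      (hp : OrPath C m b) : OrPath C a b

/-- A gate is 0-valid if it captures the empty assignment. -/
def ZeroValid (C : Circuit ι) (g : C.Gate) : Prop :=
  (∅ : Finset ι) ∈ C.S g

/-- A wire `(g, g')` is pure if `g'` is an OR-gate, or `g'` is an AND-gate all of whose
other inputs are 0-valid. -/
def PureWire (C : Circuit ι) (g g' : C.Gate) : Prop :=
  C.wire g g' ∧
    (C.typ g' = GateType.or ∨
      (C.typ g' = GateType.and ∧ ∀ h ∈ C.inputs g', h ≠ g → C.ZeroValid h))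

/-- A gate `g` is upwards-deterministic if it is unsatisfiable or there is at most one
gate `g'` such that `(g, g')` is a pure wire. -/
def UpDetGate (C : Circuit ι) (g : C.Gate) : Prop :=
  C.S g = ∅ ∨ ∀ g1 g2 : C.Gate, C.PureWire g g1 → C.PureWire g g2 → g1 = g2

/-- A circuit is upwards-deterministic if all its AND-gates and OR-gates are. -/
def UpwardsDeterministic (C : Circuit ι) : Prop :=
  ∀ g : C.Gate, (C.typ g = GateType.and ∨ C.typ g = GateType.or) → C.UpDetGate g

end Circuit

/-- `IsTrail E a l b`: the list `l` of vertices (after `a`) forms a directed path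
from `a` to `b` following edges of `E`; distinct lists are distinct directed paths. -/
def IsTrail {α : Type*} (E : α → α → Prop) : α → List α → α → Prop
  | a, [], b => a = b
  | a, x :: l, b => E a x ∧ IsTrail E x l b

/-- A directed graph is a multitree if it is acyclic and, for every pair of distinct
vertices, there is at most one directed path from the first to the second. -/
def IsMultitree {α : Type*} (E : α → α → Prop) : Prop :=
  (∀ a : α, ¬ Relation.TransGen E a a) ∧
  ∀ a b : α, a ≠ b → ∀ l1 l2 : List α, IsTrail E a l1 b → IsTrail E a l2 b → l1 = l2

/-!
Along OR-wires captured sets only grow, so any assignment captured by a gate `a` (one exists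
by ∅-pruning) is captured by every gate reachable from `a` inside its OR-component. Two distinct
inputs of an OR-gate of the component therefore never have a common ancestor there, since
they would share that assignment against determinism. But two distinct directed paths between
the same gates must, read backwards from their common end, reach a first gate where they
enter through distinct inputs, and both of these inputs descend from the common start.
-/

namespace IsTrail

variable {α : Type*} {E : α → α → Prop}

theorem reflTransGen : ∀ {a b : α} {l : List α}, IsTrail E a l b → Relation.ReflTransGen E a b
  | _, _, [], h => h ▸ .refl
  | _, _, _ :: _, h => .head h.1 (reflTransGen h.2)

theorem append_singleton_iff : ∀ {a b c : α} {l : List α},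
    IsTrail E a (l ++ [c]) b ↔ ∃ m, IsTrail E a l m ∧ E m c ∧ c = b
  | a, b, c, [] => by simp [IsTrail]
  | a, b, c, x :: l => by simp [IsTrail, append_singleton_iff, and_assoc]

theorem transGen_of_append_singleton {a b c : α} {l : List α}
    (h : IsTrail E a (l ++ [c]) b) : Relation.TransGen E a b := by
  obtain ⟨m, hm, e, rfl⟩ := append_singleton_iff.1 h
  exact .tail' hm.reflTransGen e

end IsTrail

theorem isMultitree_of_eq_of_commonAncestor {α : Type*} {E : α → α → Prop}
    (hacyc : ∀ a : α, ¬ Relation.TransGen E a a)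
    (hjoin : ∀ a w₁ w₂ z : α, Relation.ReflTransGen E a w₁ → Relation.ReflTransGen E a w₂ →
      E w₁ z → E w₂ z → w₁ = w₂) :
    IsMultitree E := by
  suffices h : ∀ (l₁ l₂ : List α) (a b : α), IsTrail E a l₁ b → IsTrail E a l₂ b → l₁ = l₂ from
    ⟨hacyc, fun a b _ l₁ l₂ ↦ h l₁ l₂ a b⟩
  intro l₁
  induction l₁ using List.reverseRecOn with
  | nil =>
    rintro l₂ a b (rfl : a = b) h₂
    rcases l₂.eq_nil_or_concat' with rfl | ⟨l₂, c, rfl⟩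
    · rfl
    · exact (hacyc a h₂.transGen_of_append_singleton).elim
  | append_singleton l₁ c ih =>
    intro l₂ a b h₁ h₂
    rcases l₂.eq_nil_or_concat' with rfl | ⟨l₂, c', rfl⟩
    · obtain rfl : a = b := h₂
      exact (hacyc a h₁.transGen_of_append_singleton).elim
    obtain ⟨m₁, p₁, e₁, rfl⟩ := IsTrail.append_singleton_iff.1 h₁
    obtain ⟨m₂, p₂, e₂, rfl⟩ := IsTrail.append_singleton_iff.1 h₂
    obtain rfl := hjoin a m₁ m₂ _ p₁.reflTransGen p₂.reflTransGen e₁ e₂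
    rw [ih l₂ a m₁ p₁ p₂]

namespace Circuit

variable {ι : Type} [DecidableEq ι] (C : Circuit ι)

theorem S_subset_of_reflTransGen_orWire {a b : C.Gate} (h : Relation.ReflTransGen C.orWire a b) :
    C.S a ⊆ C.S b := by
  induction h with
  | refl => exact subset_rfl
  | tail _ hw ih =>
    exact ih.trans fun t ht ↦
      Captures.or _ hw.2.2 _ (Finset.mem_filter.2 ⟨Finset.mem_univ _, hw.1⟩) t ht

theorem eq_of_orWire_of_commonAncestor (hD : ∀ g, C.typ g = GateType.or → C.DeterministicOr g)
    (hP : C.EmptyPruned) {a w₁ w₂ z : C.Gate} (h₁ : Relation.ReflTransGen C.orWire a w₁)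
    (h₂ : Relation.ReflTransGen C.orWire a w₂) (e₁ : C.orWire w₁ z) (e₂ : C.orWire w₂ z) :
    w₁ = w₂ := by
  by_contra hne
  obtain ⟨t, ht⟩ := hP a
  have hdisj := hD z e₁.2.2 w₁ w₂ (Finset.mem_filter.2 ⟨Finset.mem_univ _, e₁.1⟩)
    (Finset.mem_filter.2 ⟨Finset.mem_univ _, e₂.1⟩) hne
  exact Set.disjoint_left.1 hdisj (C.S_subset_of_reflTransGen_orWire h₁ ht)
    (C.S_subset_of_reflTransGen_orWire h₂ ht)

end Circuit

theorem stmt0_general {ι : Type} [DecidableEq ι] (C : Circuit ι)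
    (hNorm : C.Normal) (hD : C.dDNNF) (g : C.Gate) :
    IsMultitree (fun a b : C.Gate =>
      a ∈ C.orComponent g ∧ b ∈ C.orComponent g ∧ C.wire a b) := by
  have hOr : ∀ a b : C.Gate, a ∈ C.orComponent g ∧ b ∈ C.orComponent g ∧ C.wire a b →
      C.orWire a b :=
    fun a b h ↦ ⟨h.2.2, h.1.1, h.2.1.1⟩
  refine isMultitree_of_eq_of_commonAncestor (fun a ha ↦ ?_) fun a w₁ w₂ z h₁ h₂ e₁ e₂ ↦ ?_
  · exact C.acyclic a (Relation.TransGen.mono (fun _ _ h ↦ h.2.2) a a ha)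
  · exact C.eq_of_orWire_of_commonAncestor hD.2 hNorm.2.1
      (Relation.ReflTransGen.mono hOr a w₁ h₁) (Relation.ReflTransGen.mono hOr a w₂ h₂)
      (hOr _ _ e₁) (hOr _ _ e₂)

/-- For any normal monotone circuit that is a d-DNNF in zero-suppressed semantics,
each OR-component of the circuit is a multitree. -/
theorem stmt0 {ι : Type} [DecidableEq ι] (C : Circuit ι) (hV : C.VarInj)
    (hNorm : C.Normal) (hD : C.dDNNF) (g : C.Gate) (hg : C.typ g = GateType.or) :
    IsMultitree (fun a b : C.Gate =>
      a ∈ C.orComponent g ∧ b ∈ C.orComponent g ∧ C.wire a b) :=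
  stmt0_general C hNorm hD g
end

section
/- For every finite multitree T in which every vertex has at most two out-neighbors, there exist a finite multitree Q in which every vertex has at most two out-neighbors and which has at most 2·|T| vertices, a map q from the vertices of T to the vertices of Q, and a labeling λ from the vertices of Q to the leaves of T, such that for every vertex n of T, the restriction of λ to the set of vertices of Q reachable from q(n) (including q(n) itself) is a bijection onto the set of leaves of T reachable from n (including n itself if n is a leaf). -/
/-- A leaf of a directed graph: a vertex with no outgoing edges. -/
def IsLeafVert {α : Type*} (E : α → α → Prop) (v : α) : Prop :=
  ∀ w : α, ¬ E v w

open Relation Set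

section Reach

variable {β γ : Type*} {F : β → β → Prop}

theorem IsTrail.reflTransGen_s1 {b : β} {l : List β} :
    ∀ {a : β}, IsTrail F a l b → ReflTransGen F a b := by
  induction l with
  | nil => rintro a rfl; exact .refl
  | cons x l ih => exact fun h => .head h.1 (ih h.2)

theorem Relation.ReflTransGen.exists_isTrail {a b : β} (h : ReflTransGen F a b) :
    ∃ l, IsTrail F a l b := by
  induction h using ReflTransGen.head_induction_on with
  | refl => exact ⟨[], rfl⟩
  | head hab _ ih => obtain ⟨l, hl⟩ := ih; exact ⟨_ :: l, hab, hl⟩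

theorem wellFounded_flip_of_acyclic [Finite β] (h : ∀ a, ¬ TransGen F a a) :
    WellFounded (flip F) := by
  have : IsTrans β (TransGen (flip F)) := ⟨fun _ _ _ => TransGen.trans⟩
  have : Std.Irrefl (TransGen (flip F)) := ⟨fun a ha => h a (transGen_swap.1 ha)⟩
  exact Subrelation.wf TransGen.single (Finite.wellFounded_of_trans_of_irrefl _)

/-- Two distinct trails from `a` to `b ≠ a` must split at some vertex into two distinct
successors, both of which reach `b`. -/
theorem isMultitree_of_disjoint_reach (hacyc : ∀ a, ¬ TransGen F a a)
    (hdisj : ∀ x y₁ y₂ z, F x y₁ → F x y₂ → y₁ ≠ y₂ →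
      ReflTransGen F y₁ z → ReflTransGen F y₂ z → False) :
    IsMultitree F := by
  refine ⟨hacyc, fun a b hab l₁ => ?_⟩
  induction l₁ generalizing a with
  | nil => exact fun _ h => absurd h hab
  | cons x₁ l₁ ih =>
    rintro (_ | ⟨x₂, l₂⟩) h₁ h₂
    · exact absurd h₂ hab
    obtain rfl : x₁ = x₂ := by
      by_contra hx
      exact hdisj a x₁ x₂ b h₁.1 h₂.1 hx h₁.2.reflTransGen_s1 h₂.2.reflTransGen_s1
    by_cases hxb : x₁ = b
    · subst hxb
      have hnil : ∀ l, IsTrail F x₁ l x₁ → l = [] := by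
        rintro (_ | ⟨y, l⟩) h
        · rfl
        · exact absurd (TransGen.head' h.1 h.2.reflTransGen_s1) (hacyc x₁)
      rw [hnil l₁ h₁.2, hnil l₂ h₂.2]
    · rw [ih x₁ hxb l₂ h₁.2 h₂.2]

variable (F) in
def optReach (o : Option β) : Set β := {z | ∃ y ∈ o, ReflTransGen F y z}

@[simp] theorem optReach_none : optReach F none = ∅ := by simp [optReach]

@[simp] theorem optReach_some (x : β) : optReach F (some x) = {z | ReflTransGen F x z} := by
  simp [optReach]

theorem reach_eq_insert_optReach {x : β} {o₁ o₂ : Option β}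
    (hsucc : ∀ y, F x y ↔ y ∈ o₁ ∨ y ∈ o₂) :
    {z | ReflTransGen F x z} = insert x (optReach F o₁ ∪ optReach F o₂) := by
  ext z
  rw [mem_ofPred_eq, ReflTransGen.cases_head_iff]
  simp only [mem_insert_iff, mem_union, optReach, mem_ofPred_eq, hsucc]
  grind

theorem bijOn_reach_of_succ {lab : β → γ} {x : β} {o₁ o₂ : Option β} {t₁ t₂ : Set γ}
    (hsucc : ∀ y, F x y ↔ y ∈ o₁ ∨ y ∈ o₂)
    (h₁ : BijOn lab (optReach F o₁) t₁) (h₂ : BijOn lab (optReach F o₂) t₂)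
    (hdisj : Disjoint t₁ t₂) (hx : lab x ∉ t₁ ∪ t₂) :
    BijOn lab {z | ReflTransGen F x z} (insert (lab x) (t₁ ∪ t₂)) := by
  rw [reach_eq_insert_optReach hsucc]
  refine (h₁.union h₂ ?_).insert hx
  rintro y (hy | hy) z (hz | hz) hyz
  · exact h₁.injOn hy hz hyz
  · exact (disjoint_left.1 hdisj (h₁.mapsTo hy) (hyz ▸ h₂.mapsTo hz)).elim
  · exact (disjoint_left.1 hdisj (hyz ▸ h₁.mapsTo hz) (h₂.mapsTo hy)).elim
  · exact h₂.injOn hy hz hyz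

theorem ncard_setOf_mem_or_mem_le_two (o₁ o₂ : Option β) :
    {y | y ∈ o₁ ∨ y ∈ o₂}.ncard ≤ 2 := by
  have hle (o : Option β) : {y | y ∈ o}.ncard ≤ 1 := by
    cases o <;> simp
  exact (ncard_union_le {y | y ∈ o₁} {y | y ∈ o₂}).trans (add_le_add (hle o₁) (hle o₂))

end Reach

section Transport

open Function

variable {β γ δ : Type*} (F : γ → γ → Prop) (e : β ≃ γ)

theorem isTrail_onFun_equiv {b : β} {l : List β} : ∀ {a : β},
    IsTrail (F on ⇑e) a l b ↔ IsTrail F (e a) (l.map e) (e b) := by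
  induction l with
  | nil => exact fun {_} => e.injective.eq_iff.symm
  | cons x l ih => exact and_congr Iff.rfl ih

theorem IsMultitree.onFun_equiv {F : γ → γ → Prop} (h : IsMultitree F) (e : β ≃ γ) :
    IsMultitree (F on ⇑e) := by
  refine ⟨fun a ha => h.1 (e a) (ha.lift e fun _ _ => id), fun a b hab l₁ l₂ h₁ h₂ => ?_⟩
  refine List.map_injective_iff.2 e.injective (h.2 (e a) (e b) (e.injective.ne hab) _ _ ?_ ?_)
  exacts [(isTrail_onFun_equiv F e).1 h₁, (isTrail_onFun_equiv F e).1 h₂]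

theorem reflTransGen_onFun_equiv {a b : β} :
    ReflTransGen (F on ⇑e) a b ↔ ReflTransGen F (e a) (e b) := by
  refine ⟨fun h => h.lift e fun _ _ => id, fun h => ?_⟩
  simpa [onFun] using h.lift e.symm (p := F on e) fun x y => by simp [onFun]

theorem ncard_setOf_onFun_equiv (a : β) : {b | (F on ⇑e) a b}.ncard = {c | F (e a) c}.ncard :=
  ncard_preimage_of_injective_subset_range e.injective fun c _ => e.surjective c

theorem Set.BijOn.reach_onFun_equiv {lab : γ → δ} {x : γ} {t : Set δ}
    (h : BijOn lab {y | ReflTransGen F x y} t) :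
    BijOn (lab ∘ e) {w | ReflTransGen (F on ⇑e) (e.symm x) w} t := by
  have hreach : {w | ReflTransGen (F on ⇑e) (e.symm x) w} = e ⁻¹' {y | ReflTransGen F x y} := by
    ext w
    simp [reflTransGen_onFun_equiv]
  rw [hreach]
  exact h.comp e.bijective.bijOn_preimage

end Transport

namespace Multitree

variable {V : Type*} (E : V → V → Prop)

open scoped Classical in
noncomputable def fstChild (n : V) : V :=
  if h : {w | E n w}.Nonempty then h.some else n

open scoped Classical in
noncomputable def sndChild (n : V) : V :=
  if h : ({w | E n w} \ {fstChild E n}).Nonempty then h.some else fstChild E n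

def leavesFrom (n : V) : Set V := {v | IsLeafVert E v ∧ ReflTransGen E n v}

variable {E}

theorem fstChild_of_isLeaf {n : V} (h : IsLeafVert E n) : fstChild E n = n :=
  dif_neg fun ⟨w, hw⟩ => h w hw

theorem sndChild_of_isLeaf {n : V} (h : IsLeafVert E n) : sndChild E n = n := by
  rw [sndChild, dif_neg fun ⟨w, hw, _⟩ => h w hw, fstChild_of_isLeaf h]

theorem adj_fstChild {n : V} (h : ¬ IsLeafVert E n) : E n (fstChild E n) := by
  have hne : {w | E n w}.Nonempty := by simpa [IsLeafVert, Set.Nonempty] using h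
  rw [fstChild, dif_pos hne]
  exact hne.some_mem

theorem adj_sndChild {n : V} (h : ¬ IsLeafVert E n) : E n (sndChild E n) := by
  rw [sndChild]
  split_ifs with hne
  exacts [hne.some_mem.1, adj_fstChild h]

theorem eq_fstChild_or_eq_sndChild_of_adj [Finite V] (hdeg : ∀ v, {w | E v w}.ncard ≤ 2)
    {n w : V} (hw : E n w) : w = fstChild E n ∨ w = sndChild E n := by
  by_contra! hne
  have hsnd : ({w | E n w} \ {fstChild E n}).Nonempty := ⟨w, hw, hne.1⟩
  have hsnd_ne : sndChild E n ≠ fstChild E n := by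
    rw [sndChild, dif_pos hsnd]
    exact hsnd.some_mem.2
  have hn : ¬ IsLeafVert E n := fun h => h w hw
  refine (hdeg n).not_gt ((two_lt_ncard_iff (toFinite _)).2 ?_)
  exact ⟨_, _, _, adj_fstChild hn, adj_sndChild hn, hw, hsnd_ne.symm, hne.1.symm, hne.2.symm⟩

theorem not_isLeaf_of_fstChild_ne_sndChild {n : V} (h : fstChild E n ≠ sndChild E n) :
    ¬ IsLeafVert E n :=
  fun hn => h (by rw [fstChild_of_isLeaf hn, sndChild_of_isLeaf hn])

theorem leavesFrom_of_isLeaf {n : V} (h : IsLeafVert E n) : leavesFrom E n = {n} := by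
  ext v
  simp only [leavesFrom, mem_ofPred_eq, mem_singleton_iff, reflTransGen_iff_eq h]
  exact ⟨And.right, fun hv => ⟨hv ▸ h, hv⟩⟩

theorem leavesFrom_subset_of_adj {n c : V} (h : E n c) : leavesFrom E c ⊆ leavesFrom E n :=
  fun _ hv => ⟨hv.1, .head h hv.2⟩

theorem leavesFrom_eq_union [Finite V] (hdeg : ∀ v, {w | E v w}.ncard ≤ 2) {n : V}
    (h : ¬ IsLeafVert E n) :
    leavesFrom E n = leavesFrom E (fstChild E n) ∪ leavesFrom E (sndChild E n) := by
  refine subset_antisymm (fun v ⟨hv, hnv⟩ => ?_) (union_subset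
    (leavesFrom_subset_of_adj (adj_fstChild h)) (leavesFrom_subset_of_adj (adj_sndChild h)))
  obtain rfl | ⟨c, hc, hcv⟩ := hnv.cases_head
  · exact absurd hv h
  obtain rfl | rfl := eq_fstChild_or_eq_sndChild_of_adj hdeg hc
  exacts [.inl ⟨hv, hcv⟩, .inr ⟨hv, hcv⟩]

/-- A leaf reachable from two distinct out-neighbours `a`, `b` of `n` would be the end of
two distinct trails from `n`. -/
theorem _root_.IsMultitree.disjoint_leavesFrom (hMT : IsMultitree E) {n a b : V} (ha : E n a)
    (hb : E n b) (hab : a ≠ b) : Disjoint (leavesFrom E a) (leavesFrom E b) := by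
  refine disjoint_left.2 fun v ⟨hv, hav⟩ ⟨_, hbv⟩ => ?_
  obtain ⟨l₁, hl₁⟩ := hav.exists_isTrail
  obtain ⟨l₂, hl₂⟩ := hbv.exists_isTrail
  have hnv : n ≠ v := by rintro rfl; exact hv a ha
  exact hab (List.cons.inj (hMT.2 n v hnv (a :: l₁) (b :: l₂) ⟨ha, hl₁⟩ ⟨hb, hl₂⟩)).1

variable (E) (hwf : WellFounded (flip E))

open scoped Classical in
noncomputable def lastLeaf : V → V :=
  hwf.fix fun n IH => if h : IsLeafVert E n then n else IH (sndChild E n) (adj_sndChild h)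

open scoped Classical in
noncomputable def branchPoint : V → V :=
  hwf.fix fun n IH => if h : ¬ IsLeafVert E n ∧ fstChild E n = sndChild E n then
    IH (fstChild E n) (adj_fstChild h.1) else n

variable {E}

theorem lastLeaf_of_isLeaf {n : V} (h : IsLeafVert E n) : lastLeaf E hwf n = n := by
  rw [lastLeaf, hwf.fix_eq, dif_pos h]

theorem lastLeaf_of_not_isLeaf {n : V} (h : ¬ IsLeafVert E n) :
    lastLeaf E hwf n = lastLeaf E hwf (sndChild E n) := by
  rw [lastLeaf, hwf.fix_eq, dif_neg h]

theorem lastLeaf_mem_leavesFrom (n : V) : lastLeaf E hwf n ∈ leavesFrom E n := by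
  induction n using hwf.induction with
  | _ n ih =>
  by_cases h : IsLeafVert E n
  · rw [lastLeaf_of_isLeaf hwf h, leavesFrom_of_isLeaf h]
    rfl
  · rw [lastLeaf_of_not_isLeaf hwf h]
    exact leavesFrom_subset_of_adj (adj_sndChild h) (ih _ (adj_sndChild h))

theorem branchPoint_of_not_unary {n : V} (h : IsLeafVert E n ∨ fstChild E n ≠ sndChild E n) :
    branchPoint E hwf n = n := by
  rw [branchPoint, hwf.fix_eq, dif_neg (by tauto)]

theorem branchPoint_of_unary {n : V} (hn : ¬ IsLeafVert E n) (h : fstChild E n = sndChild E n) :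
    branchPoint E hwf n = branchPoint E hwf (fstChild E n) := by
  rw [branchPoint, hwf.fix_eq, dif_pos ⟨hn, h⟩]

theorem reflTransGen_branchPoint (n : V) : ReflTransGen E n (branchPoint E hwf n) := by
  induction n using hwf.induction with
  | _ n ih =>
  by_cases h : ¬ IsLeafVert E n ∧ fstChild E n = sndChild E n
  · rw [branchPoint_of_unary hwf h.1 h.2]
    exact .head (adj_fstChild h.1) (ih _ (adj_fstChild h.1))
  · rw [branchPoint_of_not_unary hwf (by tauto)]

variable (E)

/-- The leaves enumerated from the vertex `(branchPoint E hwf n, b)` of the index graph. -/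
def entryLeaves (b : Bool) (n : V) : Set V :=
  if b then leavesFrom E n \ {lastLeaf E hwf n} else leavesFrom E n

open scoped Classical in
noncomputable def entry (b : Bool) (n : V) : Option (V × Bool) :=
  if (entryLeaves E hwf b n).Nonempty then some (branchPoint E hwf n, b) else none

def indexGraph (x y : V × Bool) : Prop :=
  fstChild E x.1 ≠ sndChild E x.1 ∧
    (y ∈ entry E hwf true (fstChild E x.1) ∨ y ∈ entry E hwf x.2 (sndChild E x.1))

noncomputable def indexLabel (x : V × Bool) : V := lastLeaf E hwf (fstChild E x.1)

variable {E}

theorem entryLeaves_subset (b : Bool) (n : V) : entryLeaves E hwf b n ⊆ leavesFrom E n := by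
  cases b
  exacts [subset_rfl, sdiff_subset]

theorem entryLeaves_of_unary [Finite V] (hdeg : ∀ v, {w | E v w}.ncard ≤ 2) {n : V}
    (hn : ¬ IsLeafVert E n) (h : fstChild E n = sndChild E n) (b : Bool) :
    entryLeaves E hwf b n = entryLeaves E hwf b (fstChild E n) := by
  rw [entryLeaves, entryLeaves, leavesFrom_eq_union hdeg hn, lastLeaf_of_not_isLeaf hwf hn, ← h,
    union_self]

theorem entry_of_unary [Finite V] (hdeg : ∀ v, {w | E v w}.ncard ≤ 2) {n : V}
    (hn : ¬ IsLeafVert E n) (h : fstChild E n = sndChild E n) (b : Bool) :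
    entry E hwf b n = entry E hwf b (fstChild E n) := by
  rw [entry, entry, entryLeaves_of_unary hwf hdeg hn h, branchPoint_of_unary hwf hn h]

theorem entryLeaves_of_branching [Finite V] (hMT : IsMultitree E)
    (hdeg : ∀ v, {w | E v w}.ncard ≤ 2) {n : V} (h : fstChild E n ≠ sndChild E n) (b : Bool) :
    entryLeaves E hwf b n = insert (lastLeaf E hwf (fstChild E n))
      (entryLeaves E hwf true (fstChild E n) ∪ entryLeaves E hwf b (sndChild E n)) := by
  have hn := not_isLeaf_of_fstChild_ne_sndChild h
  have hdisj := hMT.disjoint_leavesFrom (adj_fstChild hn) (adj_sndChild hn) h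
  have hmem₁ := lastLeaf_mem_leavesFrom hwf (fstChild E n)
  have hmem₂ : lastLeaf E hwf (sndChild E n) ∉ leavesFrom E (fstChild E n) :=
    disjoint_right.1 hdisj (lastLeaf_mem_leavesFrom hwf _)
  have hfst : insert (lastLeaf E hwf (fstChild E n)) (entryLeaves E hwf true (fstChild E n)) =
      leavesFrom E (fstChild E n) := by
    rw [entryLeaves, if_pos rfl, insert_sdiff_singleton, insert_eq_of_mem hmem₁]
  rw [← insert_union, hfst]
  cases b
  · simp [entryLeaves, leavesFrom_eq_union hdeg hn]
  · simp [entryLeaves, leavesFrom_eq_union hdeg hn, lastLeaf_of_not_isLeaf hwf hn,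
      union_sdiff_distrib, sdiff_singleton_eq_self hmem₂]

theorem bijOn_optReach_entry_iff {lab : V × Bool → V} {b : Bool} {n : V} :
    BijOn lab (optReach (indexGraph E hwf) (entry E hwf b n)) (entryLeaves E hwf b n) ↔
      ((entryLeaves E hwf b n).Nonempty →
        BijOn lab {z | ReflTransGen (indexGraph E hwf) (branchPoint E hwf n, b) z}
          (entryLeaves E hwf b n)) := by
  rw [entry]
  split_ifs with h
  · simp [h]
  · simp [not_nonempty_iff_eq_empty.1 h]

theorem bijOn_optReach_entry [Finite V] (hMT : IsMultitree E)
    (hdeg : ∀ v, {w | E v w}.ncard ≤ 2) (b : Bool) (n : V) :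
    BijOn (indexLabel E hwf) (optReach (indexGraph E hwf) (entry E hwf b n))
      (entryLeaves E hwf b n) := by
  induction n using hwf.induction generalizing b with
  | _ n ih =>
  by_cases hn : IsLeafVert E n
  · refine bijOn_optReach_entry_iff hwf |>.2 fun hne => ?_
    rw [branchPoint_of_not_unary hwf (.inl hn)]
    cases b
    · have hsucc : ∀ y, ¬ indexGraph E hwf (n, false) y := fun y hy =>
        hy.1 (by rw [fstChild_of_isLeaf hn, sndChild_of_isLeaf hn])
      have hreach : {z | ReflTransGen (indexGraph E hwf) (n, false) z} = {(n, false)} := by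
        ext
        simp [reflTransGen_iff_eq hsucc]
      rw [hreach, entryLeaves, if_neg Bool.false_ne_true, leavesFrom_of_isLeaf hn, bijOn_singleton,
        indexLabel, fstChild_of_isLeaf hn, lastLeaf_of_isLeaf hwf hn]
    · simp [entryLeaves, leavesFrom_of_isLeaf hn, lastLeaf_of_isLeaf hwf hn] at hne
  by_cases hc : fstChild E n = sndChild E n
  · rw [entry_of_unary hwf hdeg hn hc, entryLeaves_of_unary hwf hdeg hn hc]
    exact ih _ (adj_fstChild hn) b
  refine bijOn_optReach_entry_iff hwf |>.2 fun _ => ?_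
  have hdisj := hMT.disjoint_leavesFrom (adj_fstChild hn) (adj_sndChild hn) hc
  rw [branchPoint_of_not_unary hwf (.inr hc), entryLeaves_of_branching hwf hMT hdeg hc]
  refine bijOn_reach_of_succ (fun y => and_iff_right hc) (ih _ (adj_fstChild hn) true)
    (ih _ (adj_sndChild hn) b)
    (hdisj.mono (entryLeaves_subset hwf _ _) (entryLeaves_subset hwf _ _)) ?_
  rintro (h | h)
  · exact h.2 rfl
  · exact disjoint_left.1 hdisj (lastLeaf_mem_leavesFrom hwf _) (entryLeaves_subset hwf _ _ h)

theorem indexLabel_isLeaf (x : V × Bool) : IsLeafVert E (indexLabel E hwf x) :=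
  (lastLeaf_mem_leavesFrom hwf _).1

theorem ncard_indexGraph_le [Finite V] (x : V × Bool) : {y | indexGraph E hwf x y}.ncard ≤ 2 :=
  (ncard_le_ncard (fun _ hy => hy.2) (toFinite _)).trans (ncard_setOf_mem_or_mem_le_two _ _)

theorem fst_eq_branchPoint_of_mem_entry {b : Bool} {c : V} {y : V × Bool}
    (hy : y ∈ entry E hwf b c) : y.1 = branchPoint E hwf c := by
  rw [entry] at hy
  split_ifs at hy
  · obtain rfl := Option.mem_some_iff.1 hy
    rfl
  · exact absurd hy (Option.not_mem_none y)

theorem transGen_fst_of_indexGraph {x y : V × Bool} (h : indexGraph E hwf x y) :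
    TransGen E x.1 y.1 := by
  have hn := not_isLeaf_of_fstChild_ne_sndChild h.1
  rcases h.2 with hy | hy
  · rw [fst_eq_branchPoint_of_mem_entry hwf hy]
    exact .head' (adj_fstChild hn) (reflTransGen_branchPoint hwf _)
  · rw [fst_eq_branchPoint_of_mem_entry hwf hy]
    exact .head' (adj_sndChild hn) (reflTransGen_branchPoint hwf _)

theorem indexLabel_mem_leavesFrom_of_mem_entry [Finite V] (hMT : IsMultitree E)
    (hdeg : ∀ v, {w | E v w}.ncard ≤ 2) {b : Bool} {c : V} {y z : V × Bool}
    (hy : y ∈ entry E hwf b c) (hz : ReflTransGen (indexGraph E hwf) y z) :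
    indexLabel E hwf z ∈ leavesFrom E c :=
  entryLeaves_subset hwf b c ((bijOn_optReach_entry hwf hMT hdeg b c).mapsTo ⟨y, hy, hz⟩)

theorem indexGraph_isMultitree [Finite V] (hMT : IsMultitree E)
    (hdeg : ∀ v, {w | E v w}.ncard ≤ 2) : IsMultitree (indexGraph E hwf) := by
  refine isMultitree_of_disjoint_reach
    (fun a ha => hMT.1 a.1 (ha.lift' Prod.fst fun _ _ => transGen_fst_of_indexGraph hwf)) ?_
  rintro ⟨n, b⟩ y₁ y₂ z ⟨hc, hy₁⟩ ⟨-, hy₂⟩ hne hz₁ hz₂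
  have hn := not_isLeaf_of_fstChild_ne_sndChild hc
  have hdisj := hMT.disjoint_leavesFrom (adj_fstChild hn) (adj_sndChild hn) hc
  rcases hy₁ with h₁ | h₁ <;> rcases hy₂ with h₂ | h₂
  · exact hne (Option.mem_unique h₁ h₂)
  · exact disjoint_left.1 hdisj (indexLabel_mem_leavesFrom_of_mem_entry hwf hMT hdeg h₁ hz₁)
      (indexLabel_mem_leavesFrom_of_mem_entry hwf hMT hdeg h₂ hz₂)
  · exact disjoint_left.1 hdisj (indexLabel_mem_leavesFrom_of_mem_entry hwf hMT hdeg h₂ hz₂)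
      (indexLabel_mem_leavesFrom_of_mem_entry hwf hMT hdeg h₁ hz₁)
  · exact hne (Option.mem_unique h₁ h₂)

theorem bijOn_reach_indexGraph [Finite V] (hMT : IsMultitree E)
    (hdeg : ∀ v, {w | E v w}.ncard ≤ 2) (n : V) :
    BijOn (indexLabel E hwf) {z | ReflTransGen (indexGraph E hwf) (branchPoint E hwf n, false) z}
      (leavesFrom E n) :=
  (bijOn_optReach_entry_iff hwf).1 (bijOn_optReach_entry hwf hMT hdeg false n)
    ⟨_, lastLeaf_mem_leavesFrom hwf n⟩

end Multitree

/-- For every finite multitree `T` (vertices `V`, edges `E`) in which every vertex has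
at most two out-neighbors, there exist a finite multitree `Q` (on `Fin m` with
`m ≤ 2·|T|` vertices) with out-degree at most two, a map `q` from vertices of `T` to
vertices of `Q`, and a labeling `lab` of the vertices of `Q` by leaves of `T`, such
that for every vertex `n` of `T`, the restriction of `lab` to the vertices of `Q`
reachable from `q n` is a bijection onto the leaves of `T` reachable from `n`. -/
theorem stmt1 {V : Type} [Fintype V] (E : V → V → Prop) (hMT : IsMultitree E)
    (hdeg : ∀ v : V, {w : V | E v w}.ncard ≤ 2) :
    ∃ (m : ℕ) (F : Fin m → Fin m → Prop) (q : V → Fin m) (lab : Fin m → V),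
      m ≤ 2 * Fintype.card V ∧
      IsMultitree F ∧
      (∀ w : Fin m, {w' : Fin m | F w w'}.ncard ≤ 2) ∧
      (∀ w : Fin m, IsLeafVert E (lab w)) ∧
      ∀ n : V, Set.BijOn lab {w : Fin m | Relation.ReflTransGen F (q n) w}
        {v : V | IsLeafVert E v ∧ Relation.ReflTransGen E n v} := by
  have hwf := wellFounded_flip_of_acyclic hMT.1
  let e := (Fintype.equivFin (V × Bool)).symm
  refine ⟨_, Function.onFun (Multitree.indexGraph E hwf) e,
    fun n => e.symm (Multitree.branchPoint E hwf n, false), Multitree.indexLabel E hwf ∘ e, ?_,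
    (Multitree.indexGraph_isMultitree hwf hMT hdeg).onFun_equiv e, fun w => ?_,
    fun w => Multitree.indexLabel_isLeaf hwf (e w),
    fun n => (Multitree.bijOn_reach_indexGraph hwf hMT hdeg n).reach_onFun_equiv _ e⟩
  · simp [mul_comm]
  · rw [ncard_setOf_onFun_equiv]
    exact Multitree.ncard_indexGraph_le hwf (e w)
end

section
/- For every compressed trace T of a normal monotone circuit C, every leaf of T is a variable gate of C, and the number of vertices of T is at most 6 times the number of leaves of T (hence |T| ≤ 6·|ν|, where the minimal valuation ν of T is the set of its leaves). -/
/-- A rooted tree of gates of `C`, rooted at the output gate, represented by its vertex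
set and a parent function (meaningful on non-root vertices); every vertex is required to
be reachable from the root by child steps. -/
structure CTrace {ι : Type} [DecidableEq ι] (C : Circuit ι) where
  verts : Finset C.Gate
  par : C.Gate → C.Gate
  root_mem : C.output ∈ verts
  par_mem : ∀ g ∈ verts, g ≠ C.output → par g ∈ verts
  reach : ∀ g ∈ verts,
    Relation.ReflTransGen (fun a b => b ∈ verts ∧ b ≠ C.output ∧ par b = a) C.output g

namespace CTrace

variable {ι : Type} [DecidableEq ι] {C : Circuit ι}

/-- The children of a gate in the tree. -/
def children (T : CTrace C) (g : C.Gate) : Finset C.Gate :=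
  T.verts.filter fun g' => g' ≠ C.output ∧ T.par g' = g

/-- The leaves of the tree: its vertices with no children. -/
def leaves (T : CTrace C) : Finset C.Gate :=
  T.verts.filter fun g => T.children g = ∅

/-- `T` is a compressed trace of `C`: each parent–child pair `(T.par g, g)` is joined by
an OR-path of `C` from the child to the parent; internal vertices are AND- or OR-gates;
the children of each AND-gate of `T` are exactly its inputs in `C`; the child of each
exit of `T` is exactly its one input in `C`; and each non-exit OR-gate of `T` has
exactly one child, which is one of its exits. -/
def IsCompressed (T : CTrace C) : Prop :=
  (∀ g ∈ T.verts, g ≠ C.output → Circuit.OrPath C g (T.par g)) ∧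
  (∀ g ∈ T.verts, (T.children g).Nonempty → C.typ g ≠ GateType.var) ∧
  (∀ g ∈ T.verts, C.typ g = GateType.and → T.children g = C.inputs g) ∧
  (∀ g ∈ T.verts, C.IsExit g → T.children g = C.inputs g) ∧
  (∀ g ∈ T.verts, C.typ g = GateType.or → ¬ C.IsExit g →
    ∃ e : C.Gate, T.children g = {e} ∧ e ∈ C.exitsOf g)

end CTrace

section Aux

variable {ι : Type} [DecidableEq ι] {C : Circuit ι}

lemma mem_children_iff' (T : CTrace C) {g v : C.Gate} :
    v ∈ T.children g ↔ v ∈ T.verts ∧ v ≠ C.output ∧ T.par v = g := by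
  simp [CTrace.children]

lemma and_fanin_ne_zero (hN : C.Normal) {g : C.Gate} (h : C.typ g = GateType.and) :
    C.fanin g ≠ 0 := by
  intro h0
  have hin : C.inputs g = ∅ := Finset.card_eq_zero.mp h0
  have hcap : C.Captures g ((C.inputs g).biUnion fun _ => ∅) :=
    Circuit.Captures.and g h _ (by intro g' hg'; rw [hin] at hg'; simp at hg')
  rw [hin] at hcap
  simp only [Finset.biUnion_empty] at hcap
  exact hN.2.2.1 g hcap

lemma exit_input_not_or (hN : C.Normal) {g c : C.Gate} (hex : C.IsExit g)
    (hc : c ∈ C.inputs g) : C.typ c ≠ GateType.or := by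
  obtain ⟨hor, g', hg', hne⟩ := hex
  have h1 : C.fanin g = 1 := (hN.2.2.2.2 g ⟨hor, g', hg', hne⟩).1
  have hcg : c = g' := Finset.card_le_one.mp (le_of_eq h1) c hc g' hg'
  rwa [hcg]

lemma classify (hN : C.Normal) (T : CTrace C) (hT : T.IsCompressed)
    {g : C.Gate} (hg : g ∈ T.verts) :
    (C.typ g = GateType.var ∧ (T.children g).card = 0) ∨
    (C.typ g = GateType.and ∧ (T.children g).card = 2) ∨
    (C.typ g = GateType.or ∧ (T.children g).card = 1) := by
  cases htyp : C.typ g with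
  | var =>
    left; refine ⟨rfl, ?_⟩
    rw [Finset.card_eq_zero]
    by_contra h
    exact hT.2.1 g hg (Finset.nonempty_of_ne_empty h) htyp
  | and =>
    right; left; refine ⟨rfl, ?_⟩
    rw [hT.2.2.1 g hg htyp]
    have h2 := hN.1 g
    have h1 := hN.2.2.2.1 g htyp
    have h0 := and_fanin_ne_zero hN htyp
    unfold Circuit.fanin at h2 h1 h0
    omega
  | or =>
    right; right; refine ⟨rfl, ?_⟩
    by_cases hex : C.IsExit g
    · rw [hT.2.2.2.1 g hg hex]; exact (hN.2.2.2.2 g hex).1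
    · obtain ⟨e, he, _⟩ := hT.2.2.2.2 g hg htyp hex
      rw [he]; simp

lemma not_or_card_ne_one (hN : C.Normal) (T : CTrace C) (hT : T.IsCompressed)
    {g : C.Gate} (hg : g ∈ T.verts) (h : C.typ g ≠ GateType.or) :
    (T.children g).card ≠ 1 := by
  rcases classify hN T hT hg with ⟨_, h0⟩ | ⟨_, h2⟩ | ⟨ho, _⟩
  · omega
  · omega
  · exact absurd ho h

lemma no_three_unary (hN : C.Normal) (T : CTrace C) (hT : T.IsCompressed)
    {g c d : C.Gate} (hg : g ∈ T.verts)
    (h1 : (T.children g).card = 1) (hc : c ∈ T.children g)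
    (h2 : (T.children c).card = 1) (hd : d ∈ T.children c) :
    (T.children d).card ≠ 1 := by
  have hcv : c ∈ T.verts := Finset.filter_subset _ _ hc
  have hdv : d ∈ T.verts := Finset.filter_subset _ _ hd
  have hgor : C.typ g = GateType.or := by
    rcases classify hN T hT hg with ⟨_, h⟩ | ⟨_, h⟩ | ⟨h, _⟩ <;> first | omega | exact h
  have hcor : C.typ c = GateType.or := by
    rcases classify hN T hT hcv with ⟨_, h⟩ | ⟨_, h⟩ | ⟨h, _⟩ <;> first | omega | exact h
  have hgex : ¬ C.IsExit g := by
    intro hex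
    have hceq := hT.2.2.2.1 g hg hex
    rw [hceq] at hc
    exact exit_input_not_or hN hex hc hcor
  obtain ⟨e, heq, hee⟩ := hT.2.2.2.2 g hg hgor hgex
  have hce : c = e := by rw [heq] at hc; simpa using hc
  have hcex : C.IsExit c := hce ▸ hee.1
  have hdeq := hT.2.2.2.1 c hcv hcex
  rw [hdeq] at hd
  have := exit_input_not_or hN hcex hd
  exact not_or_card_ne_one hN T hT hdv this

lemma sum_children_card (T : CTrace C) :
    (∑ g ∈ T.verts, (T.children g).card) + 1 = T.verts.card := by
  classical
  set S := T.verts.filter (fun v => v ≠ C.output) with hS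
  have h1 : ∀ v ∈ S, T.par v ∈ T.verts := by
    intro v hv
    simp only [hS, Finset.mem_filter] at hv
    exact T.par_mem v hv.1 hv.2
  have h2 : S.card = ∑ g ∈ T.verts, (S.filter fun v => T.par v = g).card :=
    Finset.card_eq_sum_card_fiberwise h1
  have h3 : ∀ g, (S.filter fun v => T.par v = g) = T.children g := by
    intro g; ext v
    simp [hS, CTrace.children, Finset.mem_filter, and_assoc]
  have h4 : (T.verts.filter fun v => ¬ v ≠ C.output) = {C.output} := by
    ext v
    simp only [Finset.mem_filter, not_not, Finset.mem_singleton]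
    constructor
    · rintro ⟨_, rfl⟩; rfl
    · rintro rfl; exact ⟨T.root_mem, rfl⟩
  have h5 : S.card + 1 = T.verts.card := by
    have := Finset.card_filter_add_card_filter_not
      (s := T.verts) (p := fun v => v ≠ C.output)
    rw [h4] at this
    simpa [hS] using this
  calc (∑ g ∈ T.verts, (T.children g).card) + 1
      = (∑ g ∈ T.verts, (S.filter fun v => T.par v = g).card) + 1 := by
        simp only [h3]
    _ = S.card + 1 := by rw [← h2]
    _ = T.verts.card := h5

noncomputable def childOf (T : CTrace C) (g : C.Gate) : C.Gate :=
  if h : (T.children g).Nonempty then h.choose else g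

lemma childOf_mem {T : CTrace C} {g : C.Gate} (h : (T.children g).Nonempty) :
    childOf T g ∈ T.children g := by
  rw [childOf, dif_pos h]; exact h.choose_spec

end Aux

/-- For every compressed trace `T` of a normal monotone circuit `C`: every leaf of `T`
is a variable gate of `C`, and the number of vertices of `T` is at most 6 times the
number of leaves of `T` (hence `|T| ≤ 6·|ν|` for the minimal valuation `ν` of `T`,
which is the set of its leaves). -/
theorem stmt2 {ι : Type} [DecidableEq ι] (C : Circuit ι) (hV : C.VarInj)
    (hN : C.Normal) (T : CTrace C) (hT : T.IsCompressed) :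
    (∀ g ∈ T.leaves, C.typ g = GateType.var) ∧
    T.verts.card ≤ 6 * T.leaves.card := by
  classical
  have hsub : ∀ {g c : C.Gate}, c ∈ T.children g → c ∈ T.verts :=
    fun h => Finset.filter_subset _ _ h
  constructor
  · intro g hg
    rw [CTrace.leaves, Finset.mem_filter] at hg
    rcases classify hN T hT hg.1 with ⟨h, _⟩ | ⟨_, h2⟩ | ⟨_, h1⟩
    · exact h
    · rw [hg.2] at h2; simp at h2
    · rw [hg.2] at h1; simp at h1
  -- counting
  set φ : C.Gate → C.Gate := fun g =>
    if (T.children (childOf T g)).card = 1 then childOf T (childOf T g)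
    else childOf T g with hφ
  set U : Finset C.Gate := T.verts.filter (fun g => (T.children g).card = 1) with hU
  set W : Finset C.Gate := T.verts.filter (fun g => ¬ (T.children g).card = 1) with hW
  -- maps_to
  have hmaps : ∀ u ∈ U, φ u ∈ W := by
    intro u hu
    rw [hU, Finset.mem_filter] at hu
    obtain ⟨huv, hu1⟩ := hu
    have hne : (T.children u).Nonempty := Finset.card_pos.mp (by omega)
    have hcmem : childOf T u ∈ T.children u := childOf_mem hne
    have hcv : childOf T u ∈ T.verts := hsub hcmem
    by_cases hc1 : (T.children (childOf T u)).card = 1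
    · have hne2 : (T.children (childOf T u)).Nonempty := Finset.card_pos.mp (by omega)
      have hdmem := childOf_mem hne2
      have hdv : childOf T (childOf T u) ∈ T.verts := hsub hdmem
      have hd1 := no_three_unary hN T hT huv hu1 hcmem hc1 hdmem
      rw [hW, Finset.mem_filter]
      simp only [hφ, if_pos hc1]
      exact ⟨hdv, hd1⟩
    · rw [hW, Finset.mem_filter]
      simp only [hφ, if_neg hc1]
      exact ⟨hcv, hc1⟩
  -- fibers have size ≤ 2
  have hfiber : ∀ w ∈ W, (U.filter fun u => φ u = w).card ≤ 2 := by
    intro w _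
    have hss : (U.filter fun u => φ u = w) ⊆ {T.par w, T.par (T.par w)} := by
      intro u hu
      rw [Finset.mem_filter] at hu
      obtain ⟨hu, heq⟩ := hu
      rw [hU, Finset.mem_filter] at hu
      obtain ⟨huv, hu1⟩ := hu
      have hne : (T.children u).Nonempty := Finset.card_pos.mp (by omega)
      have hcmem : childOf T u ∈ T.children u := childOf_mem hne
      have hpc : T.par (childOf T u) = u := ((mem_children_iff' T).mp hcmem).2.2
      by_cases hc1 : (T.children (childOf T u)).card = 1
      · have hne2 : (T.children (childOf T u)).Nonempty := Finset.card_pos.mp (by omega)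
        have hdmem := childOf_mem hne2
        have hpd : T.par (childOf T (childOf T u)) = childOf T u :=
          ((mem_children_iff' T).mp hdmem).2.2
        have hwd : w = childOf T (childOf T u) := by
          rw [← heq]; simp only [hφ, if_pos hc1]
        subst hwd
        rw [hpd, hpc]
        simp
      · have hwd : w = childOf T u := by
          rw [← heq]; simp only [hφ, if_neg hc1]
        subst hwd
        rw [hpc]
        simp
    calc (U.filter fun u => φ u = w).card
        ≤ ({T.par w, T.par (T.par w)} : Finset C.Gate).card := Finset.card_le_card hss
      _ ≤ 2 := Finset.card_insert_le _ _
  have hUW : U.card ≤ 2 * W.card := by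
    rw [Finset.card_eq_sum_card_fiberwise hmaps]
    calc (∑ w ∈ W, (U.filter fun u => φ u = w).card) ≤ ∑ _w ∈ W, 2 :=
          Finset.sum_le_sum hfiber
      _ = 2 * W.card := by rw [Finset.sum_const, smul_eq_mul, mul_comm]
  -- split cardinalities and sums
  have hUWcard : U.card + W.card = T.verts.card := by
    rw [hU, hW]
    exact Finset.card_filter_add_card_filter_not _
  set A : Finset C.Gate := T.verts.filter (fun g => (T.children g).card = 2) with hA
  set R : Finset C.Gate := T.verts.filter (fun g => ¬ (T.children g).card = 2) with hR
  have hAR : A.card + R.card = T.verts.card := by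
    rw [hA, hR]; exact Finset.card_filter_add_card_filter_not _
  set U' : Finset C.Gate := R.filter (fun g => (T.children g).card = 1) with hU'
  set Z : Finset C.Gate := R.filter (fun g => ¬ (T.children g).card = 1) with hZ
  have hUZ : U'.card + Z.card = R.card := by
    rw [hU', hZ]; exact Finset.card_filter_add_card_filter_not _
  have hU'U : U' = U := by
    rw [hU', hR, hU, Finset.filter_filter]
    apply Finset.filter_congr
    intro g _
    constructor
    · rintro ⟨_, h⟩; exact h
    · intro h; exact ⟨by omega, h⟩
  have hZzero : ∀ g ∈ Z, (T.children g).card = 0 := by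
    intro g hg
    rw [hZ, Finset.mem_filter, hR, Finset.mem_filter] at hg
    obtain ⟨⟨hgv, h2⟩, h1⟩ := hg
    rcases classify hN T hT hgv with ⟨_, h⟩ | ⟨_, h⟩ | ⟨_, h⟩ <;> omega
  have hZL : Z.card = T.leaves.card := by
    congr 1
    rw [hZ, hR, Finset.filter_filter, CTrace.leaves]
    apply Finset.filter_congr
    intro g hg
    simp only [← Finset.card_eq_zero]
    constructor
    · rintro ⟨h2, h1⟩
      rcases classify hN T hT hg with ⟨_, h⟩ | ⟨_, h⟩ | ⟨_, h⟩ <;> omega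
    · intro h; constructor <;> omega
  -- compute the sum
  have hsumA : (∑ g ∈ A, (T.children g).card) = 2 * A.card := by
    rw [Finset.sum_congr rfl (fun g hg => (Finset.mem_filter.mp hg).2),
      Finset.sum_const, smul_eq_mul, mul_comm]
  have hsumU : (∑ g ∈ U', (T.children g).card) = U'.card := by
    have hone : ∀ g ∈ U', (T.children g).card = 1 := by
      intro g hg
      rw [hU', Finset.mem_filter] at hg
      exact hg.2
    rw [Finset.sum_congr rfl hone, Finset.sum_const, smul_eq_mul, mul_one]
  have hsumZ : (∑ g ∈ Z, (T.children g).card) = 0 :=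
    Finset.sum_eq_zero hZzero
  have hsplitAR : (∑ g ∈ T.verts, (T.children g).card) =
      (∑ g ∈ A, (T.children g).card) + (∑ g ∈ R, (T.children g).card) := by
    rw [hA, hR]
    exact (Finset.sum_filter_add_sum_filter_not _ _ _).symm
  have hsplitUZ : (∑ g ∈ R, (T.children g).card) =
      (∑ g ∈ U', (T.children g).card) + (∑ g ∈ Z, (T.children g).card) := by
    rw [hU', hZ]
    exact (Finset.sum_filter_add_sum_filter_not _ _ _).symm
  have hsum := sum_children_card T
  rw [hsplitAR, hsplitUZ, hsumA, hsumU, hsumZ] at hsum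
  have hcardU : U'.card = U.card := by rw [hU'U]
  omega
end

section
/- There is a universal constant c such that for every k ∈ ℕ and every monotone circuit C that is a d-DNNF in zero-suppressed semantics, there exists a monotone circuit C' that is a d-DNNF in zero-suppressed semantics with S(C') = {t ∈ S(C) : |t| ≤ k} and |C'| ≤ c·(k+1)²·|C|. -/
/-!
Split every gate `g` into copies `(g, j)`, `j ≤ k`, capturing the assignments of `S(g)` of
weight exactly `j`; OR-gates and variable gates split directly. An AND-gate is first binarized
along a fixed order of its inputs, as a chain of prefix products: the weight-`j` part of a
prefix extended by one input is the union, over `j₁ + j₂ = j`, of the products of the weight-`j₁`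
part of the prefix with the weight-`j₂` part of the new input. Decomposability makes the two
factors disjoint, so weights add up; it also makes these products pairwise disjoint, because the
factor coming from the new input is the part of the assignment lying below that input. Every
wire of `C` thus yields `O((k + 1)²)` gates and wires. Correctness is checked gate by gate: the
intended sets satisfy the local gate equations, whose only solution is the family of captured sets.
-/

section ChoiceUnions

open Finset

variable {α β : Type*} [DecidableEq β]

def choiceUnions (σ : α → Set (Finset β)) (s : Finset α) : Set (Finset β) :=
  {t | ∃ f : α → Finset β, (∀ a ∈ s, f a ∈ σ a) ∧ s.biUnion f = t}

variable {σ τ : α → Set (Finset β)} {s : Finset α}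

theorem choiceUnions_congr (h : ∀ a ∈ s, σ a = τ a) : choiceUnions σ s = choiceUnions τ s := by
  ext t
  refine exists_congr fun f => and_congr_left fun _ => forall₂_congr fun a ha => ?_
  rw [h a ha]

@[simp]
theorem choiceUnions_empty : choiceUnions σ ∅ = {∅} := by
  ext t
  simp [choiceUnions, eq_comm]

theorem choiceUnions_insert [DecidableEq α] {a : α} (ha : a ∉ s) :
    choiceUnions σ (insert a s) = Set.image2 (· ∪ ·) (σ a) (choiceUnions σ s) := by
  ext t
  constructor
  · rintro ⟨f, hf, rfl⟩
    exact ⟨f a, hf a (mem_insert_self a s), _, ⟨f, fun b hb => hf b (mem_insert_of_mem hb), rfl⟩,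
      (biUnion_insert ..).symm⟩
  · rintro ⟨u, hu, _, ⟨f, hf, rfl⟩, rfl⟩
    refine ⟨Function.update f a u, fun b hb => ?_, ?_⟩
    · rcases mem_insert.mp hb with rfl | hb
      · simpa using hu
      · rw [Function.update_of_ne (ne_of_mem_of_not_mem hb ha)]
        exact hf b hb
    · rw [biUnion_insert, Function.update_self]
      congr 1
      exact biUnion_congr rfl fun b hb => Function.update_of_ne (ne_of_mem_of_not_mem hb ha) _ _

theorem choiceUnions_pair [DecidableEq α] {a b : α} (hab : a ≠ b) :
    choiceUnions σ {a, b} = Set.image2 (· ∪ ·) (σ a) (σ b) := by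
  rw [choiceUnions_insert (by simpa using hab), ← insert_empty,
    choiceUnions_insert (notMem_empty b), choiceUnions_empty, Set.image2_singleton_right]
  simp

end ChoiceUnions

theorem Finset.left_eq_of_union_eq_union {α : Type*} [DecidableEq α] {s₁ s₂ t₁ t₂ : Finset α}
    (h₁ : Disjoint s₁ t₂) (h₂ : Disjoint s₂ t₁) (h : s₁ ∪ t₁ = s₂ ∪ t₂) : s₁ = s₂ := by
  have key {s s' t t' : Finset α} (hst : Disjoint s t') (h : s ∪ t = s' ∪ t') : s ⊆ s' :=
    fun x hx => (mem_union.mp (h ▸ mem_union_left t hx)).resolve_right (disjoint_left.mp hst hx)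
  exact (key h₁ h).antisymm (key h₂ h.symm)

theorem Relation.not_transGen_self_of_lt {α β : Type*} [Preorder β] {r : α → α → Prop}
    (f : α → β) (hf : ∀ a b, r a b → f a < f b) (a : α) : ¬ Relation.TransGen r a a := by
  suffices ∀ {a b}, Relation.TransGen r a b → f a < f b from fun h => lt_irrefl _ (this h)
  intro a b h
  induction h with
  | single h => exact hf _ _ h
  | tail _ h ih => exact ih.trans (hf _ _ h)

namespace Circuit

open Finset

variable {ι : Type} [DecidableEq ι] {C : Circuit ι}

@[simp]
theorem mem_inputs {a b : C.Gate} : a ∈ C.inputs b ↔ C.wire a b := by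
  simp [inputs]

theorem inputs_eq_empty_of_var {g : C.Gate} (hg : C.typ g = .var) : C.inputs g = ∅ :=
  eq_empty_of_forall_notMem fun h hh => C.var_no_input h g hg (mem_inputs.mp hh)

theorem wellFounded_wire (C : Circuit ι) : WellFounded C.wire :=
  have : Std.Irrefl (Relation.TransGen C.wire) := ⟨C.acyclic⟩
  Subrelation.wf Relation.TransGen.single (Finite.wellFounded_of_trans_of_irrefl _)

variable (C) in
def evalGate (σ : C.Gate → Set (Finset ι)) (g : C.Gate) : Set (Finset ι) :=
  match C.typ g with
  | .var => {{C.vlab g}}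
  | .and => choiceUnions σ (C.inputs g)
  | .or => ⋃ h ∈ C.inputs g, σ h

theorem evalGate_congr {σ τ : C.Gate → Set (Finset ι)} {g : C.Gate}
    (h : ∀ h ∈ C.inputs g, σ h = τ h) : C.evalGate σ g = C.evalGate τ g := by
  unfold evalGate
  split
  · rfl
  · exact choiceUnions_congr h
  · exact Set.iUnion₂_congr h

theorem evalGate_S (g : C.Gate) : C.evalGate C.S g = C.S g := by
  ext t
  unfold evalGate
  split <;> rename_i hg <;> constructor
  · rintro rfl
    exact .var g hg
  · intro h
    cases h <;> simp_all
  · rintro ⟨f, hf, rfl⟩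
    exact .and g hg f hf
  · intro h
    cases h with
    | and _ _ f hf => exact ⟨f, hf, rfl⟩
    | _ => simp_all
  · simp only [Set.mem_iUnion]
    rintro ⟨h, hh, ht⟩
    exact .or g hg h hh t ht
  · intro h
    cases h with
    | or _ _ h hh _ ht => exact Set.mem_biUnion hh ht
    | _ => simp_all

theorem S_eq_of_evalGate_eq {σ : C.Gate → Set (Finset ι)} (hσ : ∀ g, C.evalGate σ g = σ g) :
    C.S = σ := by
  funext g
  induction g using C.wellFounded_wire.induction with
  | _ g ih =>
    rw [← evalGate_S, ← hσ]
    exact evalGate_congr fun h hh => ih h (mem_inputs.mp hh)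

theorem evalGate_of_var {σ : C.Gate → Set (Finset ι)} {g : C.Gate} (hg : C.typ g = .var) :
    C.evalGate σ g = {{C.vlab g}} := by
  rw [evalGate, hg]

theorem evalGate_of_and {σ : C.Gate → Set (Finset ι)} {g : C.Gate} (hg : C.typ g = .and) :
    C.evalGate σ g = choiceUnions σ (C.inputs g) := by
  rw [evalGate, hg]

theorem evalGate_of_or {σ : C.Gate → Set (Finset ι)} {g : C.Gate} (hg : C.typ g = .or) :
    C.evalGate σ g = ⋃ h ∈ C.inputs g, σ h := by
  rw [evalGate, hg]

theorem exists_var_of_mem_S {g : C.Gate} {t : Finset ι} (ht : t ∈ C.S g) {x : ι} (hx : x ∈ t) :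
    ∃ v, C.typ v = .var ∧ C.vlab v = x ∧ C.Reaches v g := by
  induction ht with
  | var g hg =>
    exact ⟨g, hg, (mem_singleton.mp hx).symm, .refl⟩
  | and g _ f _ ih =>
    obtain ⟨h, hh, hxh⟩ := mem_biUnion.mp hx
    obtain ⟨v, hv, rfl, hvh⟩ := ih h hh hxh
    exact ⟨v, hv, rfl, hvh.tail (mem_inputs.mp hh)⟩
  | or g _ h hh _ _ ih =>
    obtain ⟨v, hv, rfl, hvh⟩ := ih hx
    exact ⟨v, hv, rfl, hvh.tail (mem_inputs.mp hh)⟩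

theorem disjoint_of_mem_choiceUnions (hinj : C.VarInj) {g h : C.Gate} {s : Finset C.Gate}
    (hg : C.DecomposableAnd g) (hs : s ⊆ C.inputs g) (hh : h ∈ C.inputs g) (hhs : h ∉ s)
    {t u : Finset ι} (ht : t ∈ C.S h) (hu : u ∈ choiceUnions C.S s) : Disjoint t u := by
  obtain ⟨f, hf, rfl⟩ := hu
  refine disjoint_left.mpr fun x hxt hxu => ?_
  obtain ⟨h', hh', hxh'⟩ := mem_biUnion.mp hxu
  obtain ⟨v, hv, rfl, hvh⟩ := exists_var_of_mem_S ht hxt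
  obtain ⟨v', hv', hvv', hvh'⟩ := exists_var_of_mem_S (hf h' hh') hxh'
  exact hg v h h' hv hh (hs hh') (ne_of_mem_of_not_mem hh' hhs).symm hvh
    (hinj hv' hv hvv' ▸ hvh')

section Enumeration

variable (C)

abbrev AndGate : Type := {g : C.Gate // C.typ g = .and}

noncomputable def inputAt (g : C.Gate) (i : Fin (C.fanin g)) : C.Gate :=
  (C.inputs g).equivFin.symm i

noncomputable def inputPrefix (g : C.Gate) (n : ℕ) : Finset C.Gate :=
  (univ.filter fun i : Fin (C.fanin g) => (i : ℕ) < n).image (C.inputAt g)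

noncomputable def height (g : C.Gate) : ℕ :=
  {g' | Relation.TransGen C.wire g' g}.ncard

abbrev AndInput : Type := Σ g : C.AndGate, Fin (C.fanin g)

variable {C} {g : C.Gate}

theorem inputAt_mem (i : Fin (C.fanin g)) : C.inputAt g i ∈ C.inputs g :=
  ((C.inputs g).equivFin.symm i).2

theorem inputAt_injective : Function.Injective (C.inputAt g) :=
  Subtype.val_injective.comp (C.inputs g).equivFin.symm.injective

theorem inputPrefix_subset (n : ℕ) : C.inputPrefix g n ⊆ C.inputs g := by
  simp only [inputPrefix, image_subset_iff]
  exact fun i _ => inputAt_mem i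

@[simp]
theorem inputPrefix_zero : C.inputPrefix g 0 = ∅ := by
  simp [inputPrefix]

theorem inputPrefix_fanin : C.inputPrefix g (C.fanin g) = C.inputs g := by
  refine (inputPrefix_subset _).antisymm fun h hh => ?_
  simp only [inputPrefix, mem_image, mem_filter, mem_univ, true_and]
  exact ⟨(C.inputs g).equivFin ⟨h, hh⟩, Fin.is_lt _, by simp [inputAt]⟩

theorem inputAt_notMem_inputPrefix (i : Fin (C.fanin g)) : C.inputAt g i ∉ C.inputPrefix g i := by
  simp [inputPrefix, inputAt_injective.eq_iff]

theorem inputPrefix_succ (i : Fin (C.fanin g)) :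
    C.inputPrefix g (i + 1) = insert (C.inputAt g i) (C.inputPrefix g i) := by
  ext h
  simp only [inputPrefix, mem_image, mem_filter, mem_univ, true_and, mem_insert,
    Nat.lt_succ_iff_lt_or_eq]
  constructor
  · rintro ⟨l, hl | hl, rfl⟩
    · exact .inr ⟨l, hl, rfl⟩
    · exact .inl (by rw [Fin.ext hl])
  · rintro (rfl | ⟨l, hl, rfl⟩)
    · exact ⟨i, .inr rfl, rfl⟩
    · exact ⟨l, .inl hl, rfl⟩

theorem disjoint_of_mem_S_inputAt (hinj : C.VarInj) (hg : C.DecomposableAnd g)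
    (i : Fin (C.fanin g)) ⦃t u : Finset ι⦄ (ht : t ∈ C.S (C.inputAt g i))
    (hu : u ∈ choiceUnions C.S (C.inputPrefix g i)) : Disjoint t u :=
  disjoint_of_mem_choiceUnions hinj hg (inputPrefix_subset _) (inputAt_mem i)
    (inputAt_notMem_inputPrefix i) ht hu

theorem card_wire : Fintype.card {p : C.Gate × C.Gate // C.wire p.1 p.2} =
    {p : C.Gate × C.Gate | C.wire p.1 p.2}.ncard := by
  rw [← Nat.card_coe_set_eq, Nat.card_eq_fintype_card]
  rfl

theorem height_lt_of_wire {a b : C.Gate} (h : C.wire a b) : C.height a < C.height b := by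
  refine Set.ncard_lt_ncard ?_ (Set.toFinite _)
  refine Set.ssubset_iff_of_subset (fun x hx => Relation.TransGen.tail hx h) |>.mpr ?_
  exact ⟨a, .single h, C.acyclic a⟩

theorem height_lt_card (g : C.Gate) : C.height g < Fintype.card C.Gate := by
  rw [← Nat.card_eq_fintype_card, ← Set.ncard_univ]
  refine Set.ncard_lt_ncard (Set.ssubset_univ_iff.mpr fun h => ?_)
  exact C.acyclic g (Set.eq_univ_iff_forall.mp h g)

end Enumeration

end Circuit

namespace Homogenization

open Circuit Finset

variable {ι : Type} [DecidableEq ι] (C : Circuit ι) (k : ℕ)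

/-- The gates of the homogenized circuit. `gate g j` captures the weight-`j` part of `S(g)`.
For an AND-gate `g`, `pre g i j` captures the weight-`j` part of the product of the first `i`
inputs of `g` (for `i = 0` an AND-gate or an OR-gate without inputs), and `step g i j₁ j₂` is the
AND of the weight-`j₁` part of that product with the weight-`j₂` part of input number `i`. -/
inductive Node : Type
  | gate (g : C.Gate) (j : Fin (k + 1))
  | pre (g : C.AndGate) (i : Fin (C.fanin g + 1)) (j : Fin (k + 1))
  | step (g : C.AndGate) (i : Fin (C.fanin g)) (j₁ j₂ : Fin (k + 1))
  | out

noncomputable instance : DecidableEq (Node C k) := Classical.decEq _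

def nodeEquiv : Node C k ≃
    (C.Gate × Fin (k + 1)) ⊕ ((Σ g : C.AndGate, Fin (C.fanin g + 1)) × Fin (k + 1)) ⊕
      (C.AndInput × Fin (k + 1) × Fin (k + 1)) ⊕ Unit where
  toFun
    | .gate g j => .inl (g, j)
    | .pre g i j => .inr (.inl (⟨g, i⟩, j))
    | .step g i j₁ j₂ => .inr (.inr (.inl (⟨g, i⟩, j₁, j₂)))
    | .out => .inr (.inr (.inr ()))
  invFun
    | .inl (g, j) => .gate g j
    | .inr (.inl (⟨g, i⟩, j)) => .pre g i j
    | .inr (.inr (.inl (⟨g, i⟩, j₁, j₂))) => .step g i j₁ j₂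
    | .inr (.inr (.inr ())) => .out
  left_inv x := by cases x <;> rfl
  right_inv x := by rcases x with ⟨g, j⟩ | ⟨⟨g, i⟩, j⟩ | ⟨⟨g, i⟩, j₁, j₂⟩ | ⟨⟨⟩⟩ <;> rfl

noncomputable instance : Fintype (Node C k) := Fintype.ofEquiv _ (nodeEquiv C k).symm

variable {C k}

noncomputable def inputsOf : Node C k → Finset (Node C k)
  | .gate g j =>
    if h : C.typ g = .and then {.pre ⟨g, h⟩ (Fin.last _) j} else (C.inputs g).image (.gate · j)
  | .pre _ ⟨0, _⟩ _ => ∅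
  | .pre g ⟨i + 1, hi⟩ j =>
    (univ.filter fun p : Fin (k + 1) × Fin (k + 1) => (p.1 : ℕ) + p.2 = j).image
      fun p => .step g ⟨i, Nat.lt_of_succ_lt_succ hi⟩ p.1 p.2
  | .step g i j₁ j₂ => {.gate (C.inputAt g i) j₂, .pre g i.castSucc j₁}
  | .out => univ.image (.gate C.output)

def typOf : Node C k → GateType
  | .gate g j => if C.typ g = .var ∧ (j : ℕ) = 1 then .var else .or
  | .pre _ i j => if (i : ℕ) = 0 ∧ (j : ℕ) = 0 then .and else .or
  | .step .. => .and
  | .out => .or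

def vlabOf : Node C k → ι
  | .gate g _ => C.vlab g
  | .pre g _ _ | .step g _ _ _ => C.vlab g
  | .out => C.vlab C.output

noncomputable def rank : Node C k → ℕ ×ₗ ℕ
  | .gate g _ => toLex (C.height g, 2 * C.fanin g + 1)
  | .pre g i _ => toLex (C.height g, 2 * i)
  | .step g i _ _ => toLex (C.height g, 2 * i + 1)
  | .out => toLex (Fintype.card C.Gate, 0)

theorem inputsOf_pre_succ {g : C.AndGate} (i : Fin (C.fanin g)) (j : Fin (k + 1)) :
    inputsOf (.pre g i.succ j) =
      (univ.filter fun p : Fin (k + 1) × Fin (k + 1) => (p.1 : ℕ) + p.2 = j).image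
        fun p => .step g i p.1 p.2 :=
  rfl

theorem rank_lt_of_mem_inputsOf {x y : Node C k} (h : y ∈ inputsOf x) : rank y < rank x := by
  simp only [Prod.Lex.lt_iff]
  cases x with
  | gate g j =>
    simp only [inputsOf] at h
    split_ifs at h
    · obtain rfl := mem_singleton.mp h
      simp [rank]
    · obtain ⟨g', hg', rfl⟩ := mem_image.mp h
      exact .inl (height_lt_of_wire (mem_inputs.mp hg'))
  | pre g i j =>
    rcases i with ⟨_ | i, hi⟩
    · simp [inputsOf] at h
    · obtain ⟨p, -, rfl⟩ := mem_image.mp h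
      simp only [rank, ofLex_toLex, lt_self_iff_false, true_and, false_or]
      omega
  | step g i j₁ j₂ =>
    rcases mem_insert.mp h with rfl | h
    · exact .inl (height_lt_of_wire (mem_inputs.mp (inputAt_mem i)))
    · obtain rfl := mem_singleton.mp h
      simp [rank]
  | out =>
    obtain ⟨j, -, rfl⟩ := mem_image.mp h
    exact .inl (height_lt_card _)

theorem typOf_eq_var {x : Node C k} (hx : typOf x = .var) :
    ∃ (v : C.Gate) (j : Fin (k + 1)), C.typ v = .var ∧ (j : ℕ) = 1 ∧ x = .gate v j := by
  cases x with
  | gate g j =>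
    simp only [typOf] at hx
    split_ifs at hx with h
    exact ⟨g, j, h.1, h.2, rfl⟩
  | pre g i j => simp only [typOf] at hx; split_ifs at hx
  | step => cases hx
  | out => cases hx

theorem inputsOf_eq_empty_of_typOf_eq_var {x : Node C k} (hx : typOf x = .var) :
    inputsOf x = ∅ := by
  obtain ⟨v, j, hv, -, rfl⟩ := typOf_eq_var hx
  simp [inputsOf, hv, inputs_eq_empty_of_var hv]

variable (C k) in
@[reducible]
noncomputable def _root_.Circuit.homogenize : Circuit ι where
  Gate := Node C k
  fintypeGate := inferInstance
  decEqGate := inferInstance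
  wire x y := x ∈ inputsOf y
  decWire _ _ := inferInstance
  typ := typOf
  vlab := vlabOf
  output := .out
  var_no_input x y hy := by simp [inputsOf_eq_empty_of_typOf_eq_var hy]
  acyclic := Relation.not_transGen_self_of_lt rank fun _ _ => rank_lt_of_mem_inputsOf

@[simp]
theorem inputs_homogenize (x : Node C k) : (C.homogenize k).inputs x = inputsOf x := by
  ext y
  simp [Circuit.inputs]

def spec : Node C k → Set (Finset ι)
  | .gate g j => {t ∈ C.S g | t.card = j}
  | .pre g i j => {t ∈ choiceUnions C.S (C.inputPrefix g i) | t.card = j}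
  | .step g i j₁ j₂ => Set.image2 (· ∪ ·) {t ∈ C.S (C.inputAt g i) | t.card = j₂}
      {t ∈ choiceUnions C.S (C.inputPrefix g i) | t.card = j₁}
  | .out => {t ∈ C.S C.output | t.card ≤ k}

theorem evalGate_spec_gate (g : C.Gate) (j : Fin (k + 1)) :
    (C.homogenize k).evalGate spec (.gate g j) = spec (.gate g j) := by
  have hS := C.evalGate_S g
  rcases hg : C.typ g with _ | _ | _
  · rw [evalGate_of_var hg] at hS
    by_cases hj : (j : ℕ) = 1
    · rw [evalGate_of_var (by simp [typOf, hg, hj])]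
      ext t
      simp +contextual [spec, ← hS, hj, vlabOf]
    · rw [evalGate_of_or (by simp [typOf, hg, hj])]
      ext t
      simp only [spec, ← hS, inputs_homogenize, inputsOf, hg, inputs_eq_empty_of_var hg,
        reduceCtorEq, ↓reduceDIte, image_empty, notMem_empty, Set.iUnion_of_empty,
        Set.iUnion_empty, Set.mem_empty_iff_false, Set.mem_singleton_iff, Set.mem_ofPred_eq,
        false_iff, not_and]
      rintro rfl
      simpa [eq_comm] using hj
  · rw [evalGate_of_and hg] at hS
    rw [evalGate_of_or (by simp [typOf, hg])]
    simp [spec, inputsOf, hg, inputPrefix_fanin, ← hS]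
  · rw [evalGate_of_or hg] at hS
    rw [evalGate_of_or (by simp [typOf, hg]), spec, ← hS]
    ext t
    simp only [inputs_homogenize, inputsOf, hg, spec]
    simp only [reduceCtorEq, dite_false, Set.mem_iUnion, mem_image, mem_inputs, Set.mem_ofPred_eq]
    constructor
    · rintro ⟨_, ⟨g', hg', rfl⟩, ht, hj⟩
      exact ⟨⟨g', hg', ht⟩, hj⟩
    · rintro ⟨⟨g', hg', ht⟩, hj⟩
      exact ⟨_, ⟨g', hg', rfl⟩, ht, hj⟩

theorem inputsOf_pre_zero (g : C.AndGate) (j : Fin (k + 1)) : inputsOf (.pre g 0 j) = ∅ :=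
  rfl

theorem evalGate_spec_pre_zero (g : C.AndGate) (j : Fin (k + 1)) :
    (C.homogenize k).evalGate spec (.pre g 0 j) = spec (.pre g 0 j) := by
  by_cases hj : (j : ℕ) = 0
  · rw [evalGate_of_and (by simp [typOf, hj]), inputs_homogenize, inputsOf_pre_zero]
    ext t
    simp [spec, hj]
  · rw [evalGate_of_or (by simp [typOf, hj]), inputs_homogenize, inputsOf_pre_zero]
    ext t
    simp only [notMem_empty, spec, Set.iUnion_of_empty, Set.iUnion_empty, Set.mem_empty_iff_false,
      Fin.coe_ofNat_eq_mod, Nat.zero_mod, inputPrefix_zero, choiceUnions_empty,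
      Set.mem_singleton_iff, Set.mem_ofPred_eq, false_iff, not_and]
    rintro rfl
    simpa [eq_comm] using hj

theorem evalGate_spec_pre_succ (hinj : C.VarInj) {g : C.AndGate} (hg : C.DecomposableAnd g)
    (i : Fin (C.fanin g)) (j : Fin (k + 1)) :
    (C.homogenize k).evalGate spec (.pre g i.succ j) = spec (.pre g i.succ j) := by
  have hdisj := disjoint_of_mem_S_inputAt hinj hg i
  rw [evalGate_of_or (by simp [typOf]), inputs_homogenize, inputsOf_pre_succ]
  ext t
  simp only [spec, Fin.val_succ, inputPrefix_succ,
    choiceUnions_insert (inputAt_notMem_inputPrefix i)]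
  simp only [mem_image, mem_filter, mem_univ, true_and, Prod.exists, Set.iUnion_exists,
    Set.mem_iUnion, exists_prop, exists_and_right, ↓existsAndEq, and_true, Set.mem_image2,
    Set.mem_ofPred_eq]
  constructor
  · rintro ⟨j₁, j₂, hj, u, ⟨hu, hu'⟩, v, ⟨hv, hv'⟩, rfl⟩
    exact ⟨⟨u, hu, v, hv, rfl⟩, by rw [card_union_of_disjoint (hdisj hu hv)]; omega⟩
  · rintro ⟨⟨u, hu, v, hv, rfl⟩, hcard⟩
    rw [card_union_of_disjoint (hdisj hu hv)] at hcard
    exact ⟨⟨v.card, by omega⟩, ⟨u.card, by omega⟩, by simp only; omega,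
      u, ⟨hu, rfl⟩, v, ⟨hv, rfl⟩, rfl⟩

theorem evalGate_spec_step {g : C.AndGate} (i : Fin (C.fanin g)) (j₁ j₂ : Fin (k + 1)) :
    (C.homogenize k).evalGate spec (.step g i j₁ j₂) = spec (.step g i j₁ j₂) := by
  rw [evalGate_of_and rfl, inputs_homogenize, inputsOf, choiceUnions_pair (by simp)]
  rfl

theorem evalGate_spec_out :
    (C.homogenize k).evalGate spec (.out : Node C k) = spec (.out : Node C k) := by
  rw [evalGate_of_or rfl, inputs_homogenize, inputsOf]
  ext t
  simp only [spec, mem_image, mem_univ, true_and, Set.mem_iUnion, Set.mem_ofPred_eq,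
    exists_prop, ↓existsAndEq]
  constructor
  · rintro ⟨j, ht, hj⟩
    exact ⟨ht, hj ▸ Nat.le_of_lt_succ j.2⟩
  · rintro ⟨ht, hk⟩
    exact ⟨⟨t.card, Nat.lt_succ_of_le hk⟩, ht, rfl⟩

theorem S_homogenize (hinj : C.VarInj) (hd : C.dDNNF) : (C.homogenize k).S = spec := by
  refine S_eq_of_evalGate_eq fun x => ?_
  match x with
  | .gate g j => exact evalGate_spec_gate g j
  | .pre g ⟨0, _⟩ j => exact evalGate_spec_pre_zero g j
  | .pre g ⟨i + 1, hi⟩ j =>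
    exact evalGate_spec_pre_succ hinj (hd.1 g g.2) ⟨i, Nat.lt_of_succ_lt_succ hi⟩ j
  | .step g i j₁ j₂ => exact evalGate_spec_step i j₁ j₂
  | .out => exact evalGate_spec_out

theorem captured_homogenize (hinj : C.VarInj) (hd : C.dDNNF) :
    (C.homogenize k).captured = {t ∈ C.captured | t.card ≤ k} := by
  rw [Circuit.captured, S_homogenize hinj hd]
  rfl

theorem varInj_homogenize (hinj : C.VarInj) : (C.homogenize k).VarInj := by
  intro x hx y hy hxy
  obtain ⟨v, j, hv, hj, rfl⟩ := typOf_eq_var hx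
  obtain ⟨w, j', hw, hj', rfl⟩ := typOf_eq_var hy
  obtain rfl := hinj hv hw hxy
  rw [Fin.ext (hj.trans hj'.symm)]

theorem disjoint_spec_step (hinj : C.VarInj) {g : C.AndGate} (hg : C.DecomposableAnd g)
    (i : Fin (C.fanin g)) {a₁ b₁ a₂ b₂ : Fin (k + 1)} (hab : (a₁ : ℕ) + b₁ = a₂ + b₂)
    (hne : (Node.step g i a₁ b₁ : Node C k) ≠ .step g i a₂ b₂) :
    Disjoint (spec (.step g i a₁ b₁)) (spec (.step g i a₂ b₂)) := by
  have hdisj := disjoint_of_mem_S_inputAt hinj hg i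
  refine Set.disjoint_left.mpr ?_
  rintro _ ⟨u₁, ⟨hu₁, hb₁⟩, v₁, ⟨hv₁, -⟩, rfl⟩ ⟨u₂, ⟨hu₂, hb₂⟩, v₂, ⟨hv₂, -⟩, he⟩
  obtain rfl := Finset.left_eq_of_union_eq_union (hdisj hu₂ hv₁) (hdisj hu₁ hv₂) he
  obtain rfl : b₁ = b₂ := Fin.ext (hb₁.symm.trans hb₂)
  exact hne (by rw [Fin.ext (by omega : (a₁ : ℕ) = a₂)])

theorem deterministicOr_homogenize (hinj : C.VarInj) (hd : C.dDNNF) (x : Node C k)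
    (hx : typOf x = .or) : (C.homogenize k).DeterministicOr x := by
  intro y₁ y₂ h₁ h₂ hne
  rw [S_homogenize hinj hd]
  rw [inputs_homogenize] at h₁ h₂
  match x with
  | .gate g j =>
    simp only [inputsOf] at h₁ h₂
    split_ifs at h₁ h₂ with hg
    · exact absurd ((mem_singleton.mp h₁).trans (mem_singleton.mp h₂).symm) hne
    · obtain ⟨g₁, hg₁, rfl⟩ := mem_image.mp h₁
      obtain ⟨g₂, hg₂, rfl⟩ := mem_image.mp h₂
      have hor : C.typ g = .or := by
        cases hg' : C.typ g
        · simp [inputs_eq_empty_of_var hg'] at hg₁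
        · exact absurd hg' hg
        · rfl
      exact Set.disjoint_of_subset (Set.sep_subset _ _) (Set.sep_subset _ _)
        (hd.2 g hor g₁ g₂ hg₁ hg₂ fun h => hne (by rw [h]))
  | .pre g ⟨0, _⟩ j => simp [inputsOf] at h₁
  | .pre g ⟨i + 1, hi⟩ j =>
    obtain ⟨⟨a₁, b₁⟩, hab₁, rfl⟩ := mem_image.mp h₁
    obtain ⟨⟨a₂, b₂⟩, hab₂, rfl⟩ := mem_image.mp h₂
    simp only [mem_filter, mem_univ, true_and] at hab₁ hab₂
    exact disjoint_spec_step hinj (hd.1 g g.2) _ (hab₁.trans hab₂.symm) hne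
  | .out =>
    obtain ⟨j₁, -, rfl⟩ := mem_image.mp h₁
    obtain ⟨j₂, -, rfl⟩ := mem_image.mp h₂
    refine Set.disjoint_left.mpr fun t ht₁ ht₂ => hne ?_
    rw [Fin.ext (ht₁.2.symm.trans ht₂.2)]

noncomputable def base : Node C k → Finset C.Gate
  | .gate g _ => {g}
  | .pre g i _ => C.inputPrefix g i
  | .step g i _ _ => C.inputPrefix g (i + 1)
  | .out => {C.output}

theorem exists_reaches_base_of_mem_inputsOf {x y : Node C k} (hy : y ∈ inputsOf x)
    {a : C.Gate} (ha : a ∈ base y) : ∃ b ∈ base x, C.Reaches a b := by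
  match x with
  | .gate g j =>
    simp only [inputsOf] at hy
    split_ifs at hy with hg
    · obtain rfl := mem_singleton.mp hy
      refine ⟨g, mem_singleton_self g, .single (mem_inputs.mp ?_)⟩
      simpa [base, inputPrefix_fanin] using ha
    · obtain ⟨g', hg', rfl⟩ := mem_image.mp hy
      obtain rfl := mem_singleton.mp ha
      exact ⟨g, mem_singleton_self g, .single (mem_inputs.mp hg')⟩
  | .pre g ⟨0, _⟩ j => simp [inputsOf] at hy
  | .pre g ⟨i + 1, hi⟩ j =>
    obtain ⟨_, -, rfl⟩ := mem_image.mp hy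
    exact ⟨a, ha, .refl⟩
  | .step g i j₁ j₂ =>
    refine ⟨a, ?_, .refl⟩
    simp only [base, inputPrefix_succ]
    rcases mem_insert.mp hy with rfl | hy
    · exact mem_insert.mpr (.inl (mem_singleton.mp ha))
    · obtain rfl := mem_singleton.mp hy
      exact mem_insert_of_mem ha
  | .out =>
    obtain ⟨j, -, rfl⟩ := mem_image.mp hy
    exact ⟨a, ha, .refl⟩

theorem exists_reaches_base_of_reaches {x y : Node C k} (h : (C.homogenize k).Reaches y x)
    {a : C.Gate} (ha : a ∈ base y) : ∃ b ∈ base x, C.Reaches a b := by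
  induction h with
  | refl => exact ⟨a, ha, .refl⟩
  | tail _ hw ih =>
    obtain ⟨b, hb, hab⟩ := ih
    obtain ⟨c, hc, hbc⟩ := exists_reaches_base_of_mem_inputsOf hw hb
    exact ⟨c, hc, hab.trans hbc⟩

theorem decomposableAnd_homogenize (hd : C.dDNNF) (x : Node C k) (hx : typOf x = .and) :
    (C.homogenize k).DecomposableAnd x := by
  intro v y₁ y₂ hv h₁ h₂ hne r₁ r₂
  rw [inputs_homogenize] at h₁ h₂
  obtain ⟨v, jv, hv', -, rfl⟩ := typOf_eq_var hv
  match x with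
  | .gate g j => simp only [typOf] at hx; split_ifs at hx
  | .pre g ⟨0, _⟩ j => simp [inputsOf] at h₁
  | .pre g ⟨i + 1, hi⟩ j => simp [typOf] at hx
  | .step g i j₁ j₂ =>
    have key {y y' : Node C k} (hy : y = .gate (C.inputAt g i) j₂) (hy' : y' = .pre g i.castSucc j₁)
        (r : (C.homogenize k).Reaches (.gate v jv) y)
        (r' : (C.homogenize k).Reaches (.gate v jv) y') : False := by
      subst hy hy'
      obtain ⟨_, hb, r⟩ := exists_reaches_base_of_reaches r (mem_singleton_self v)
      obtain rfl := mem_singleton.mp hb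
      obtain ⟨b', hb', r'⟩ := exists_reaches_base_of_reaches r' (mem_singleton_self v)
      exact hd.1 g g.2 v _ b' hv' (inputAt_mem i) (inputPrefix_subset _ hb')
        (ne_of_mem_of_not_mem hb' (inputAt_notMem_inputPrefix i)).symm r r'
    simp only [inputsOf, mem_insert, mem_singleton] at h₁ h₂
    rcases h₁ with rfl | rfl <;> rcases h₂ with rfl | rfl
    · exact hne rfl
    · exact key rfl rfl r₁ r₂
    · exact key rfl rfl r₂ r₁
    · exact hne rfl

theorem dDNNF_homogenize (hinj : C.VarInj) (hd : C.dDNNF) : (C.homogenize k).dDNNF :=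
  ⟨decomposableAnd_homogenize hd, deterministicOr_homogenize hinj hd⟩

theorem card_andInput_le :
    Fintype.card C.AndInput ≤ {p : C.Gate × C.Gate | C.wire p.1 p.2}.ncard := by
  rw [← card_wire]
  refine Fintype.card_le_of_injective
    (fun x => ⟨(C.inputAt x.1 x.2, x.1), mem_inputs.mp (inputAt_mem _)⟩) ?_
  rintro ⟨g, i⟩ ⟨g', i'⟩ h
  simp only [Subtype.mk.injEq, Prod.mk.injEq] at h
  obtain rfl := Subtype.ext h.2
  obtain rfl := inputAt_injective h.1
  rfl

variable (C k) in
theorem card_node : Fintype.card (Node C k) =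
    Fintype.card C.Gate * (k + 1) +
      (Fintype.card C.AndInput + Fintype.card C.AndGate) * (k + 1) +
      Fintype.card C.AndInput * (k + 1) ^ 2 + 1 := by
  rw [Fintype.card_congr (nodeEquiv C k)]
  simp only [Fintype.card_sum, Fintype.card_prod, Fintype.card_fin, Fintype.card_sigma,
    sum_add_distrib, sum_const, card_univ, smul_eq_mul, mul_one, Fintype.card_unique]
  ring

variable (C k) in
noncomputable def wireCover :
    ({p : C.Gate × C.Gate // C.wire p.1 p.2} × Fin (k + 1)) ⊕ (C.AndGate × Fin (k + 1)) ⊕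
      (C.AndInput × Fin (k + 1) × Fin (k + 1)) ⊕
      (C.AndInput × Fin (k + 1) × Fin (k + 1)) ⊕
      (C.AndInput × Fin (k + 1) × Fin (k + 1)) ⊕ Fin (k + 1) →
      Node C k × Node C k
  | .inl (⟨(a, b), _⟩, j) => (.gate a j, .gate b j)
  | .inr (.inl (g, j)) => (.pre g (Fin.last _) j, .gate g j)
  | .inr (.inr (.inl (⟨g, i⟩, j₁, j₂))) => (.step g i j₁ j₂, .pre g i.succ (j₁ + j₂))
  | .inr (.inr (.inr (.inl (⟨g, i⟩, j₁, j₂)))) => (.gate (C.inputAt g i) j₂, .step g i j₁ j₂)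
  | .inr (.inr (.inr (.inr (.inl (⟨g, i⟩, j₁, j₂))))) => (.pre g i.castSucc j₁, .step g i j₁ j₂)
  | .inr (.inr (.inr (.inr (.inr j)))) => (.gate C.output j, .out)

theorem wires_subset_range_wireCover :
    {p : Node C k × Node C k | p.1 ∈ inputsOf p.2} ⊆ Set.range (wireCover C k) := by
  rintro ⟨y, x⟩ (hy : y ∈ inputsOf x)
  match x with
  | .gate g j =>
    simp only [inputsOf] at hy
    split_ifs at hy with hg
    · obtain rfl := mem_singleton.mp hy
      exact ⟨.inr (.inl (⟨g, hg⟩, j)), rfl⟩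
    · obtain ⟨g', hg', rfl⟩ := mem_image.mp hy
      exact ⟨.inl (⟨(g', g), mem_inputs.mp hg'⟩, j), rfl⟩
  | .pre g ⟨0, _⟩ j => simp [inputsOf] at hy
  | .pre g ⟨i + 1, hi⟩ j =>
    obtain ⟨⟨j₁, j₂⟩, hj, rfl⟩ := mem_image.mp hy
    simp only [mem_filter, mem_univ, true_and] at hj
    refine ⟨.inr (.inr (.inl (⟨g, ⟨i, Nat.lt_of_succ_lt_succ hi⟩⟩, j₁, j₂))), ?_⟩
    have : j₁ + j₂ = j := Fin.ext (by rw [Fin.val_add, hj, Nat.mod_eq_of_lt j.2])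
    simp only [wireCover, this]
    rfl
  | .step g i j₁ j₂ =>
    rcases mem_insert.mp hy with rfl | hy
    · exact ⟨.inr (.inr (.inr (.inl (⟨g, i⟩, j₁, j₂)))), rfl⟩
    · obtain rfl := mem_singleton.mp hy
      exact ⟨.inr (.inr (.inr (.inr (.inl (⟨g, i⟩, j₁, j₂))))), rfl⟩
  | .out =>
    obtain ⟨j, -, rfl⟩ := mem_image.mp hy
    exact ⟨.inr (.inr (.inr (.inr (.inr j)))), rfl⟩

theorem ncard_wires_homogenize_le : {p : Node C k × Node C k | p.1 ∈ inputsOf p.2}.ncard ≤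
    {p : C.Gate × C.Gate | C.wire p.1 p.2}.ncard * (k + 1) + Fintype.card C.AndGate * (k + 1) +
      3 * (Fintype.card C.AndInput * (k + 1) ^ 2) + (k + 1) := by
  refine (Set.ncard_le_ncard wires_subset_range_wireCover).trans ?_
  rw [← Set.image_univ]
  refine (Set.ncard_image_le (Set.toFinite _)).trans_eq ?_
  simp only [Set.ncard_univ, Nat.card_eq_fintype_card, Fintype.card_sum, Fintype.card_prod,
    Fintype.card_fin, card_wire]
  ring

theorem size_homogenize : (C.homogenize k).size ≤ 6 * (k + 1) ^ 2 * C.size := by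
  have hG : 1 ≤ Fintype.card C.Gate := Fintype.card_pos_iff.mpr ⟨C.output⟩
  have hA : Fintype.card C.AndGate ≤ Fintype.card C.Gate := Fintype.card_subtype_le _
  have hI := card_andInput_le (C := C)
  have hW := ncard_wires_homogenize_le (C := C) (k := k)
  have hK : k + 1 ≤ (k + 1) ^ 2 := Nat.le_self_pow two_ne_zero _
  change Fintype.card (Node C k) + {p : Node C k × Node C k | p.1 ∈ inputsOf p.2}.ncard ≤
    6 * (k + 1) ^ 2 * (Fintype.card C.Gate + {p : C.Gate × C.Gate | C.wire p.1 p.2}.ncard)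
  rw [card_node]
  nlinarith

end Homogenization

/-- Homogenization: there is a universal constant `c` such that for every `k ∈ ℕ` and
every monotone circuit `C` that is a d-DNNF in zero-suppressed semantics, there exists a
monotone circuit `C'` that is a d-DNNF in zero-suppressed semantics with
`S(C') = {t ∈ S(C) : |t| ≤ k}` and `|C'| ≤ c·(k+1)²·|C|`. -/
theorem stmt4 :
    ∃ c : ℕ, 0 < c ∧
      ∀ (ι : Type) [DecidableEq ι] (k : ℕ) (C : Circuit ι),
        C.VarInj → C.dDNNF →
        ∃ C' : Circuit ι,
          C'.VarInj ∧ C'.dDNNF ∧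
          C'.captured = {t ∈ C.captured | t.card ≤ k} ∧
          C'.size ≤ c * (k + 1) ^ 2 * C.size :=
  ⟨6, by norm_num, fun _ _ k C hinj hd =>
    ⟨C.homogenize k, Homogenization.varInj_homogenize hinj,
      Homogenization.dDNNF_homogenize hinj hd, Homogenization.captured_homogenize hinj hd,
      Homogenization.size_homogenize⟩⟩
end

section
/- Let C be a normal monotone circuit in zero-suppressed semantics that is upwards-deterministic. Then every OR-gate of C has at most one outgoing wire whose target is an OR-gate; consequently, every OR-component of C, viewed as a directed graph, is a forest in which every vertex has out-degree at most one (a reversed forest). -/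
namespace Circuit

variable {ι : Type} [DecidableEq ι] {C : Circuit ι}

theorem pureWire_of_typ_or {g g' : C.Gate} (hw : C.wire g g') (hg' : C.typ g' = GateType.or) :
    C.PureWire g g' :=
  ⟨hw, Or.inl hg'⟩

theorem UpDetGate.eq_of_pureWire {g g1 g2 : C.Gate} (hg : C.UpDetGate g) (hS : (C.S g).Nonempty)
    (h1 : C.PureWire g g1) (h2 : C.PureWire g g2) : g1 = g2 :=
  hg.resolve_left hS.ne_empty g1 g2 h1 h2

theorem eq_of_wire_of_typ_or (hP : C.EmptyPruned) (hU : C.UpwardsDeterministic)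
    {g g1 g2 : C.Gate} (hg : C.typ g = GateType.or) (hg1 : C.typ g1 = GateType.or)
    (hg2 : C.typ g2 = GateType.or) (hw1 : C.wire g g1) (hw2 : C.wire g g2) : g1 = g2 :=
  (hU g (Or.inr hg)).eq_of_pureWire (hP g) (pureWire_of_typ_or hw1 hg1)
    (pureWire_of_typ_or hw2 hg2)

theorem not_transGen_self_of_le_wire {r : C.Gate → C.Gate → Prop}
    (hr : ∀ x y, r x y → C.wire x y) (a : C.Gate) : ¬ Relation.TransGen r a a :=
  fun h => C.acyclic a (Relation.TransGen.mono hr a a h)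

end Circuit

theorem stmt15_general {ι : Type} [DecidableEq ι] (C : Circuit ι)
    (hN : C.Normal) (hU : C.UpwardsDeterministic) :
    (∀ g g1 g2 : C.Gate, C.typ g = GateType.or → C.typ g1 = GateType.or →
      C.typ g2 = GateType.or → C.wire g g1 → C.wire g g2 → g1 = g2) ∧
    (∀ g : C.Gate, C.typ g = GateType.or →
      (∀ a : C.Gate, ¬ Relation.TransGen
        (fun x y => x ∈ C.orComponent g ∧ y ∈ C.orComponent g ∧ C.wire x y) a a) ∧
      (∀ a : C.Gate,
        {b : C.Gate | a ∈ C.orComponent g ∧ b ∈ C.orComponent g ∧ C.wire a b}.Subsingleton)) := by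
  have hP : C.EmptyPruned := hN.2.1
  refine ⟨fun g g1 g2 => Circuit.eq_of_wire_of_typ_or hP hU, fun g _ => ⟨?_, ?_⟩⟩
  · exact Circuit.not_transGen_self_of_le_wire fun _ _ h => h.2.2
  · rintro a b1 ⟨ha, hb1, hw1⟩ b2 ⟨-, hb2, hw2⟩
    exact Circuit.eq_of_wire_of_typ_or hP hU ha.1 hb1.1 hb2.1 hw1 hw2

/-- Let `C` be a normal monotone circuit in zero-suppressed semantics that is
upwards-deterministic.  Then every OR-gate of `C` has at most one outgoing wire whose
target is an OR-gate; consequently, every OR-component of `C`, viewed as a directed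
graph, is acyclic with every vertex of out-degree at most one (a reversed forest). -/
theorem stmt15 {ι : Type} [DecidableEq ι] (C : Circuit ι) (hV : C.VarInj)
    (hN : C.Normal) (hU : C.UpwardsDeterministic) :
    (∀ g g1 g2 : C.Gate, C.typ g = GateType.or → C.typ g1 = GateType.or →
      C.typ g2 = GateType.or → C.wire g g1 → C.wire g g2 → g1 = g2) ∧
    (∀ g : C.Gate, C.typ g = GateType.or →
      (∀ a : C.Gate, ¬ Relation.TransGen
        (fun x y => x ∈ C.orComponent g ∧ y ∈ C.orComponent g ∧ C.wire x y) a a) ∧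
      (∀ a : C.Gate,
        {b : C.Gate | a ∈ C.orComponent g ∧ b ∈ C.orComponent g ∧ C.wire a b}.Subsingleton)) :=
  stmt15_general C hN hU
end
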